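/- arXiv:math/0607412 — 10 statements merged into one kernel-verified Lean document; each statement's English description precedes it below -/
import Mathlib

section
/- Let K be a semiring and A a finite alphabet. Let R be a formal series with linear representation (λ_r, μ_r, γ_r) of dimension n and S a formal series with linear representation (λ_s, μ_s, γ_s) of dimension m. Define λ = (λ_r 0_{1×m}), γ = (γ_r λ_s γ_s ; γ_s), and let μ : A* → K^{(n+m)×(n+m)} be the monoid morphism determined on letters by the block matrices μ(a) = [[μ_r(a), γ_r λ_s μ_s(a)],[0_{m×n}, μ_s(a)]]. Then (λ, μ, γ) is a linear representation of the Cauchy product R·S, i.e. λ μ(w) γ = Σ_{uv=w} ⟨R|u⟩⟨S|v⟩ for every word w ∈ A*. -/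
open Matrix

/-- The matrix of a word: extend the letter matrices `μ` multiplicatively. -/
def wordMat {K A : Type*} [Semiring K] {d : Type*} [Fintype d] [DecidableEq d]
    (μ : A → Matrix d d K) (w : List A) : Matrix d d K :=
  (w.map μ).prod

lemma wordMat_nil {K A : Type*} [Semiring K] {d : Type*} [Fintype d] [DecidableEq d]
    (μ : A → Matrix d d K) : wordMat μ ([] : List A) = 1 := rfl

lemma wordMat_cons {K A : Type*} [Semiring K] {d : Type*} [Fintype d] [DecidableEq d]
    (μ : A → Matrix d d K) (a : A) (w : List A) :
    wordMat μ (a :: w) = μ a * wordMat μ w := by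
  simp [wordMat]

lemma aux {K A : Type*} [Semiring K] {n m : ℕ}
    (μr : A → Matrix (Fin n) (Fin n) K) (gamr : Fin n → K)
    (lams : Fin m → K) (μs : A → Matrix (Fin m) (Fin m) K) (gams : Fin m → K) :
    ∀ (w : List A) (l1 : Fin n → K) (l2 : Fin m → K),
      Sum.elim l1 l2 ⬝ᵥ
        (wordMat (fun a => Matrix.fromBlocks (μr a)
              (Matrix.of fun i j => gamr i * (lams ᵥ* μs a) j)
              0 (μs a)) w *ᵥ
          Sum.elim (fun i => gamr i * (lams ⬝ᵥ gams)) gams)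
      = (∑ k ∈ Finset.range (w.length + 1),
          (l1 ⬝ᵥ (wordMat μr (w.take k) *ᵥ gamr)) *
          (lams ⬝ᵥ (wordMat μs (w.drop k) *ᵥ gams)))
        + l2 ⬝ᵥ (wordMat μs w *ᵥ gams) := by
  intro w
  induction w with
  | nil =>
      intro l1 l2
      simp only [wordMat_nil, List.length_nil, zero_add, Finset.sum_range_one,
        List.take_zero, List.drop_zero, one_mulVec, dotProduct, Finset.sum_mul,
        Finset.mul_sum, mul_assoc, Fintype.sum_sum_type, Sum.elim_inl, Sum.elim_inr]
      rw [Finset.sum_comm]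
  | cons a w ih =>
      intro l1 l2
      rw [wordMat_cons, ← mulVec_mulVec, dotProduct_mulVec, vecMul_fromBlocks]
      have hB : (l1 ᵥ* Matrix.of fun i j => gamr i * (lams ᵥ* μs a) j)
          = fun j => (l1 ⬝ᵥ gamr) * (lams ᵥ* μs a) j := by
        funext j
        simp [vecMul, dotProduct, Finset.sum_mul, mul_assoc]
      simp only [Sum.elim_comp_inl, Sum.elim_comp_inr, vecMul_zero, add_zero, hB]
      rw [ih]
      rw [List.length_cons, Finset.sum_range_succ' _ (w.length + 1)]
      simp only [List.take_succ_cons, List.drop_succ_cons, List.take_zero, List.drop_zero,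
        wordMat_cons, wordMat_nil, one_mulVec, ← mulVec_mulVec, dotProduct_mulVec]
      rw [add_vecMul, add_dotProduct]
      have h2 : ((fun j => (l1 ⬝ᵥ gamr) * (lams ᵥ* μs a) j) ᵥ* wordMat μs w) ⬝ᵥ gams
          = (l1 ⬝ᵥ gamr) * (((lams ᵥ* μs a) ᵥ* wordMat μs w) ⬝ᵥ gams) := by
        simp [vecMul, dotProduct, Finset.mul_sum, Finset.sum_mul, mul_assoc]
      rw [h2, ← add_assoc]

/-- The triple `((λ_r 0), [[μ_r(a), γ_r λ_s μ_s(a)],[0, μ_s(a)]],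
(γ_r λ_s γ_s ; γ_s))` is a linear representation of the Cauchy product `R·S`, whose
coefficient at `w` is `Σ_{uv=w} ⟨R|u⟩⟨S|v⟩`. -/
theorem stmt_1 {K A : Type*} [Semiring K] [Fintype A] {n m : ℕ}
    (R S : List A → K)
    (lamr : Fin n → K) (μr : A → Matrix (Fin n) (Fin n) K) (gamr : Fin n → K)
    (lams : Fin m → K) (μs : A → Matrix (Fin m) (Fin m) K) (gams : Fin m → K)
    (hR : ∀ w, R w = lamr ⬝ᵥ (wordMat μr w *ᵥ gamr))
    (hS : ∀ w, S w = lams ⬝ᵥ (wordMat μs w *ᵥ gams)) :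
    ∀ w : List A,
      (Sum.elim lamr (fun _ => 0)) ⬝ᵥ
        (wordMat (fun a => Matrix.fromBlocks (μr a)
              (Matrix.of fun i j => gamr i * (lams ᵥ* μs a) j)
              0 (μs a)) w *ᵥ
          Sum.elim (fun i => gamr i * (lams ⬝ᵥ gams)) gams)
        = ∑ k ∈ Finset.range (w.length + 1), R (w.take k) * S (w.drop k) := by
  intro w
  rw [aux μr gamr lams μs gams w lamr (fun _ => 0)]
  have hz : (fun _ : Fin m => (0 : K)) ⬝ᵥ (wordMat μs w *ᵥ gams) = 0 := by
    simp [dotProduct]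
  rw [hz, add_zero]
  exact Finset.sum_congr rfl fun k _ => by rw [hR, hS]
end

section
/- Let K be a semiring and A a finite alphabet. Let S be a formal series with linear representation (λ, μ, γ) of dimension m such that λγ = 0 (equivalently ⟨S|1⟩ = 0, i.e. S is proper). Define λ* = (0_{1×m} 1) ∈ K^{1×(m+1)}, γ* = (γ ; 1) ∈ K^{(m+1)×1}, and let μ* : A* → K^{(m+1)×(m+1)} be the monoid morphism determined on letters by μ*(a) = [[μ(a) + γλμ(a), 0_{m×1}],[λμ(a), 0]]. Then (λ*, μ*, γ*) is a linear representation of the star S*, i.e. λ* μ*(w) γ* = Σ_{k=0}^{|w|} ⟨S^k|w⟩ for every word w ∈ A*, where S^k denotes the k-fold Cauchy power of S (with ⟨S^0|w⟩ = 1 if w = 1 and 0 otherwise). -/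
open Matrix

/-- Cauchy (concatenation) product of two formal series. -/
def cauchyProd {K A : Type*} [Semiring K] (R S : List A → K) : List A → K :=
  fun w => ∑ k ∈ Finset.range (w.length + 1), R (w.take k) * S (w.drop k)

/-- `k`-fold Cauchy power of a series; the `0`-th power is the unit series
(`1` at the empty word, `0` elsewhere). -/
def cauchyPow {K A : Type*} [Semiring K] (S : List A → K) : ℕ → List A → K
  | 0 => fun w => match w with | [] => 1 | _ => 0
  | k + 1 => cauchyProd S (cauchyPow S k)

section Aux
variable {K A : Type*} [Semiring K]

lemma cauchyPow_eq_zero (S : List A → K) (hS0 : S [] = 0) :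
    ∀ k (w : List A), w.length < k → cauchyPow S k w = 0 := by
  intro k
  induction k with
  | zero => intro w h; omega
  | succ k ih =>
    intro w h
    show cauchyProd S (cauchyPow S k) w = 0
    unfold cauchyProd
    apply Finset.sum_eq_zero
    intro j hj
    rw [Finset.mem_range] at hj
    rcases Nat.eq_zero_or_pos j with rfl | hj0
    · simp [hS0]
    · have hlt : (List.drop j w).length < k := by
        rw [List.length_drop]; omega
      rw [ih _ hlt, mul_zero]

/-- The star series coefficient. -/
def starSeries (S : List A → K) (w : List A) : K :=
  ∑ k ∈ Finset.range (w.length + 1), cauchyPow S k w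

lemma starSeries_ext (S : List A → K) (hS0 : S [] = 0) (v : List A) (N : ℕ)
    (hN : v.length ≤ N) :
    ∑ k ∈ Finset.range (N + 1), cauchyPow S k v = starSeries S v := by
  unfold starSeries
  symm
  apply Finset.sum_subset
  · intro x hx
    simp only [Finset.mem_range] at *
    omega
  · intro x _ hx'
    apply cauchyPow_eq_zero S hS0
    simp only [Finset.mem_range] at hx'
    omega

lemma starSeries_nil (S : List A → K) : starSeries S [] = 1 := by
  simp [starSeries, cauchyPow]

lemma starSeries_cons (S : List A → K) (hS0 : S [] = 0) (a : A) (w : List A) :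
    starSeries S (a :: w) =
      ∑ j ∈ Finset.range (w.length + 1), S (a :: w.take j) * starSeries S (w.drop j) := by
  unfold starSeries
  rw [show (a :: w).length + 1 = (w.length + 1) + 1 by simp]
  rw [Finset.sum_range_succ']
  have h0 : cauchyPow S 0 (a :: w) = 0 := rfl
  rw [h0, add_zero]
  have hexp : ∀ k, cauchyPow S (k + 1) (a :: w)
      = ∑ j ∈ Finset.range (w.length + 1), S (a :: w.take j) * cauchyPow S k (w.drop j) := by
    intro k
    show cauchyProd S (cauchyPow S k) (a :: w) = _
    unfold cauchyProd
    rw [show (a :: w).length + 1 = (w.length + 1) + 1 by simp, Finset.sum_range_succ']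
    simp [hS0]
  simp only [hexp]
  rw [Finset.sum_comm]
  refine Finset.sum_congr rfl fun j hj => ?_
  rw [← Finset.mul_sum]
  congr 1
  apply starSeries_ext S hS0
  rw [List.length_drop]; omega

end Aux

/-- If `(lam, μ, gam)` is a linear representation of a proper series `S`
(`λγ = 0`), then the triple `((0 … 0 1), [[μ(a)+γλμ(a), 0],[λμ(a), 0]], (γ ; 1))`
is a linear representation of the star `S*`, i.e. its coefficient at `w` is
`Σ_{k=0}^{|w|} ⟨S^k|w⟩`. -/
theorem stmt_2 {K A : Type*} [Semiring K] [Fintype A] {m : ℕ}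
    (S : List A → K)
    (lam : Fin m → K) (μ : A → Matrix (Fin m) (Fin m) K) (gam : Fin m → K)
    (hS : ∀ w, S w = lam ⬝ᵥ (wordMat μ w *ᵥ gam))
    (hproper : lam ⬝ᵥ gam = 0) :
    ∀ w : List A,
      (Sum.elim (fun _ : Fin m => (0 : K)) (fun _ : Unit => (1 : K))) ⬝ᵥ
        (wordMat (fun a => Matrix.fromBlocks
              (μ a + Matrix.of fun i j => gam i * (lam ᵥ* μ a) j) 0
              (Matrix.of fun _ j => (lam ᵥ* μ a) j) 0) w *ᵥ
          Sum.elim gam (fun _ : Unit => 1))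
        = ∑ k ∈ Finset.range (w.length + 1), cauchyPow S k w := by
  have hS0 : S [] = 0 := by
    rw [hS]
    simpa [wordMat, Matrix.one_mulVec] using hproper
  set bigμ := fun a => Matrix.fromBlocks
      (μ a + Matrix.of fun i j => gam i * (lam ᵥ* μ a) j) 0
      (Matrix.of fun _ j => (lam ᵥ* μ a) j) (0 : Matrix Unit Unit K) with hbigμ
  have key : ∀ w : List A,
      wordMat bigμ w *ᵥ Sum.elim gam (fun _ : Unit => 1)
        = Sum.elim
            (fun i => ∑ j ∈ Finset.range (w.length + 1),
              (wordMat μ (w.take j) *ᵥ gam) i * starSeries S (w.drop j))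
            (fun _ => starSeries S w) := by
    intro w
    induction w with
    | nil =>
      funext i
      cases i with
      | inl i => simp [wordMat, Matrix.one_mulVec, starSeries_nil]
      | inr u => simp [wordMat, Matrix.one_mulVec, starSeries_nil]
    | cons a w ih =>
      have hw : wordMat bigμ (a :: w) = bigμ a * wordMat bigμ w := by
        simp [wordMat]
      set X : Fin m → K := fun i => ∑ j ∈ Finset.range (w.length + 1),
          (wordMat μ (w.take j) *ᵥ gam) i * starSeries S (w.drop j) with hX
      rw [hw, ← Matrix.mulVec_mulVec, ih, hbigμ, Matrix.fromBlocks_mulVec]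
      simp only [Sum.elim_comp_inl, Sum.elim_comp_inr, Matrix.zero_mulVec, add_zero]
      have hdot : (lam ᵥ* μ a) ⬝ᵥ X = starSeries S (a :: w) := by
        rw [starSeries_cons S hS0]
        unfold dotProduct
        simp only [hX, Finset.mul_sum]
        rw [Finset.sum_comm]
        refine Finset.sum_congr rfl fun t ht => ?_
        have hs : S (a :: w.take t)
            = ∑ i, (lam ᵥ* μ a) i * (wordMat μ (w.take t) *ᵥ gam) i := by
          rw [hS]
          have h1 : wordMat μ (a :: w.take t) = μ a * wordMat μ (w.take t) := by
            simp [wordMat]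
          rw [h1, ← Matrix.mulVec_mulVec, Matrix.dotProduct_mulVec]
          rfl
        rw [hs, Finset.sum_mul]
        exact Finset.sum_congr rfl fun i _ => (mul_assoc _ _ _).symm
      funext i
      cases i with
      | inr u =>
        simp only [Sum.elim_inr]
        exact hdot
      | inl i =>
        simp only [Sum.elim_inl]
        rw [Matrix.add_mulVec]
        show (μ a *ᵥ X) i + ((Matrix.of fun i j => gam i * (lam ᵥ* μ a) j) *ᵥ X) i = _
        have h2 : ((Matrix.of fun i j => gam i * (lam ᵥ* μ a) j) *ᵥ X) i
            = gam i * starSeries S (a :: w) := by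
          rw [← hdot]
          show ∑ j, gam i * (lam ᵥ* μ a) j * X j = gam i * ∑ j, (lam ᵥ* μ a) j * X j
          rw [Finset.mul_sum]
          exact Finset.sum_congr rfl fun j _ => mul_assoc _ _ _
        have h1 : (μ a *ᵥ X) i = ∑ t ∈ Finset.range (w.length + 1),
            (wordMat μ (a :: w.take t) *ᵥ gam) i * starSeries S (w.drop t) := by
          show ∑ k, μ a i k * X k = _
          simp only [hX, Finset.mul_sum]
          rw [Finset.sum_comm]
          refine Finset.sum_congr rfl fun t _ => ?_
          have hc : wordMat μ (a :: w.take t) = μ a * wordMat μ (w.take t) := by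
            simp [wordMat]
          rw [hc, ← Matrix.mulVec_mulVec]
          show _ = (∑ k, μ a i k * (wordMat μ (w.take t) *ᵥ gam) k) * _
          rw [Finset.sum_mul]
          exact Finset.sum_congr rfl fun k _ => (mul_assoc _ _ _).symm
        rw [h1, h2]
        conv_rhs => rw [show (a :: w).length + 1 = (w.length + 1) + 1 by simp,
          Finset.sum_range_succ']
        simp only [List.take_succ_cons, List.drop_succ_cons, List.take_zero, List.drop_zero]
        rw [show wordMat μ ([] : List A) = 1 from rfl, Matrix.one_mulVec]
  intro w
  rw [key]
  show _ = starSeries S w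
  simp [dotProduct, Fintype.sum_sum_type]
end

section
/- Let K be a field and A a finite alphabet. For each letter a let (α_{p,q}(a))_{p,q≥0} be a finitely supported family of elements of K, and let c_α : K⟨A⟩ → K⟨A⟩ ⊗ K⟨A⟩ be the algebra morphism with c_α(1) = 1⊗1 and c_α(a) = Σ_{p,q≥0} α_{p,q}(a) a^p ⊗ a^q for each letter a. Then c_α is locally finite (i.e. for every pair of words (u,v), the set {w ∈ A* : ⟨u⊗v | c_α(w)⟩ ≠ 0} is finite) if and only if α_{0,0}(a) = 0 for every letter a ∈ A. -/
/-- The image of a letter under the morphism `c_α`: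
`c_α(a) = Σ_{p,q} α_{p,q}(a) a^p ⊗ a^q`, realized in the monoid algebra of
`A* × A*`, which is the tensor square `K⟨A⟩ ⊗ K⟨A⟩` (basis `u ⊗ v`, product
`(u₁⊗v₁)(u₂⊗v₂) = u₁u₂ ⊗ v₁v₂`). -/
noncomputable def calpha {K A : Type*} [Semiring K] (α : A → (ℕ × ℕ) →₀ K) (a : A) :
    MonoidAlgebra K (FreeMonoid A × FreeMonoid A) :=
  (α a).sum fun pq k =>
    MonoidAlgebra.single (FreeMonoid.of a ^ pq.1, FreeMonoid.of a ^ pq.2) k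

/-- The (multiplicative extension to words of the) algebra morphism
`c_α : K⟨A⟩ → K⟨A⟩ ⊗ K⟨A⟩` with `c_α(1) = 1 ⊗ 1` and the prescribed values on letters. -/
noncomputable def cExt {K A : Type*} [Semiring K] (α : A → (ℕ × ℕ) →₀ K) :
    FreeMonoid A →* MonoidAlgebra K (FreeMonoid A × FreeMonoid A) :=
  FreeMonoid.lift (calpha α)

-- length of of a ^ p
lemma FreeMonoid.length_pow' {A : Type*} (a : FreeMonoid A) (p : ℕ) :
    (a ^ p).length = p * a.length := by
  induction p with
  | zero => simp [FreeMonoid.length_one]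
  | succ n ih => rw [pow_succ, FreeMonoid.length_mul, ih]; ring

lemma pow_of_eq_one_iff {A : Type*} (a : A) (p : ℕ) :
    FreeMonoid.of a ^ p = 1 ↔ p = 0 := by
  constructor
  · intro h
    have := congrArg FreeMonoid.length h
    rw [FreeMonoid.length_pow', FreeMonoid.length_of, FreeMonoid.length_one] at this
    simpa using this
  · rintro rfl; simp

lemma mul_eq_one_pair {A : Type*} {x y : FreeMonoid A × FreeMonoid A}
    (h : x * y = 1) : x = 1 ∧ y = 1 := by
  have h1 : x.1 * y.1 = 1 := congrArg Prod.fst h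
  have h2 : x.2 * y.2 = 1 := congrArg Prod.snd h
  have l1 := congrArg FreeMonoid.length h1
  have l2 := congrArg FreeMonoid.length h2
  rw [FreeMonoid.length_mul, FreeMonoid.length_one] at l1 l2
  have : x.1 = 1 := FreeMonoid.length_eq_zero.mp (by omega)
  have : x.2 = 1 := FreeMonoid.length_eq_zero.mp (by omega)
  constructor
  · exact Prod.ext ‹x.1 = 1› ‹x.2 = 1›
  · have : y.1 = 1 := FreeMonoid.length_eq_zero.mp (by omega)
    have : y.2 = 1 := FreeMonoid.length_eq_zero.mp (by omega)
    exact Prod.ext ‹y.1 = 1› ‹y.2 = 1›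

lemma coeff_one_mul {K A : Type*} [Semiring K]
    (f g : MonoidAlgebra K (FreeMonoid A × FreeMonoid A)) :
    (f * g).coeff 1 = f.coeff 1 * g.coeff 1 := by
  classical
  rw [MonoidAlgebra.coeff_mul, Finsupp.sum]
  have step : ∀ a₁ ∈ f.coeff.support,
      (g.coeff.sum fun a₂ b₂ => if a₁ * a₂ = 1 then f.coeff a₁ * b₂ else 0)
      = if a₁ = 1 then f.coeff a₁ * g.coeff 1 else 0 := by
    intro a₁ _
    by_cases h1 : a₁ = 1
    · subst h1
      rw [if_pos rfl, Finsupp.sum]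
      simp only [one_mul]
      rw [Finset.sum_ite_eq' g.coeff.support 1 (fun a₂ => f.coeff 1 * g.coeff a₂)]
      by_cases hg : (1 : FreeMonoid A × FreeMonoid A) ∈ g.coeff.support
      · rw [if_pos hg]
      · rw [if_neg hg, Finsupp.notMem_support_iff.mp hg, mul_zero]
    · rw [if_neg h1]
      apply Finset.sum_eq_zero
      intro a₂ _
      simp only
      rw [if_neg]
      intro hc
      exact h1 (mul_eq_one_pair hc).1
  rw [Finset.sum_congr rfl step, Finset.sum_ite_eq' f.coeff.support 1 (fun a₁ => f.coeff a₁ * g.coeff 1)]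
  by_cases hf : (1 : FreeMonoid A × FreeMonoid A) ∈ f.coeff.support
  · rw [if_pos hf]
  · rw [if_neg hf, Finsupp.notMem_support_iff.mp hf, zero_mul]

lemma calpha_apply_one {K A : Type*} [Semiring K] (α : A → (ℕ × ℕ) →₀ K) (a : A) :
    (calpha α a).coeff 1 = α a (0, 0) := by
  classical
  rw [calpha, MonoidAlgebra.coeff_finsuppSum, Finsupp.sum_apply, Finsupp.sum]
  have step : ∀ pq ∈ (α a).support,
      (MonoidAlgebra.single (FreeMonoid.of a ^ pq.1, FreeMonoid.of a ^ pq.2) (α a pq) :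
        MonoidAlgebra K (FreeMonoid A × FreeMonoid A)).coeff 1
      = if pq = (0, 0) then α a pq else 0 := by
    intro pq _
    rw [MonoidAlgebra.coeff_single, Finsupp.single_apply]
    congr 1
    simp only [eq_iff_iff]
    constructor
    · intro h
      have h1 : FreeMonoid.of a ^ pq.1 = 1 := congrArg Prod.fst h
      have h2 : FreeMonoid.of a ^ pq.2 = 1 := congrArg Prod.snd h
      have := (pow_of_eq_one_iff a pq.1).mp h1
      have := (pow_of_eq_one_iff a pq.2).mp h2
      exact Prod.ext ‹pq.1 = 0› ‹pq.2 = 0›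
    · rintro rfl; simp
  rw [Finset.sum_congr rfl step, Finset.sum_ite_eq' (α a).support (0, 0) (fun pq => α a pq)]
  by_cases h : ((0, 0) : ℕ × ℕ) ∈ (α a).support
  · rw [if_pos h]
  · rw [if_neg h, Finsupp.notMem_support_iff.mp h]

lemma calpha_support {K A : Type*} [Semiring K] (α : A → (ℕ × ℕ) →₀ K) (a : A)
    {x : FreeMonoid A × FreeMonoid A} (h : (calpha α a).coeff x ≠ 0) :
    ∃ pq : ℕ × ℕ, α a pq ≠ 0 ∧ x = (FreeMonoid.of a ^ pq.1, FreeMonoid.of a ^ pq.2) := by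
  classical
  rw [calpha, MonoidAlgebra.coeff_finsuppSum, Finsupp.sum_apply, Finsupp.sum] at h
  obtain ⟨pq, hpq, hne⟩ := Finset.exists_ne_zero_of_sum_ne_zero h
  refine ⟨pq, Finsupp.mem_support_iff.mp hpq, ?_⟩
  rw [MonoidAlgebra.coeff_single, Finsupp.single_apply] at hne
  by_cases hx : (FreeMonoid.of a ^ pq.1, FreeMonoid.of a ^ pq.2) = x
  · exact hx.symm
  · rw [if_neg hx] at hne; exact absurd rfl hne

lemma pow_coeff_one {K A : Type*} [Semiring K]
    (f : MonoidAlgebra K (FreeMonoid A × FreeMonoid A)) (n : ℕ) :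
    (f ^ n).coeff 1 = (f.coeff 1) ^ n := by
  classical
  induction n with
  | zero =>
    simp only [pow_zero]
    rw [MonoidAlgebra.one_def, MonoidAlgebra.coeff_single, Finsupp.single_apply, if_pos rfl]
  | succ n ih =>
    rw [pow_succ, pow_succ, coeff_one_mul, ih]

lemma cExt_length_le {K A : Type*} [Semiring K] (α : A → (ℕ × ℕ) →₀ K)
    (hz : ∀ a : A, α a (0, 0) = 0) (w u v : FreeMonoid A)
    (h : (cExt α w).coeff (u, v) ≠ 0) : w.length ≤ u.length + v.length := by
  classical
  induction w using FreeMonoid.recOn generalizing u v with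
  | one =>
    rw [map_one, MonoidAlgebra.one_def, MonoidAlgebra.coeff_single, Finsupp.single_apply] at h
    by_cases hx : (1 : FreeMonoid A × FreeMonoid A) = (u, v)
    · have hu : (1 : FreeMonoid A) = u := congrArg Prod.fst hx
      have hv : (1 : FreeMonoid A) = v := congrArg Prod.snd hx
      rw [← hu, ← hv]
      simp [FreeMonoid.length_one]
    · rw [if_neg hx] at h; exact absurd rfl h
  | of_mul x xs IH =>
    rw [map_mul] at h
    rw [show cExt α (FreeMonoid.of x) = calpha α x from FreeMonoid.lift_eval_of _ _] at h
    have hmem : (u, v) ∈ (calpha α x * cExt α xs).coeff.support := Finsupp.mem_support_iff.mpr h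
    have hsub := MonoidAlgebra.support_coeff_mul_subset (calpha α x) (cExt α xs) hmem
    rw [Finset.mem_mul] at hsub
    obtain ⟨p, hp, q, hq, hpq⟩ := hsub
    obtain ⟨pq, hα, hpform⟩ := calpha_support α x (Finsupp.mem_support_iff.mp hp)
    have hq' : (cExt α xs).coeff (q.1, q.2) ≠ 0 := by
      have : q = (q.1, q.2) := rfl
      rw [← this]
      exact Finsupp.mem_support_iff.mp hq
    have hIH := IH q.1 q.2 hq'
    have hu : p.1 * q.1 = u := congrArg Prod.fst hpq
    have hv : p.2 * q.2 = v := congrArg Prod.snd hpq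
    have hlu : u.length = p.1.length + q.1.length := by rw [← hu, FreeMonoid.length_mul]
    have hlv : v.length = p.2.length + q.2.length := by rw [← hv, FreeMonoid.length_mul]
    have hp1 : p.1.length = pq.1 := by
      rw [hpform]; simp [FreeMonoid.length_pow', FreeMonoid.length_of]
    have hp2 : p.2.length = pq.2 := by
      rw [hpform]; simp [FreeMonoid.length_pow', FreeMonoid.length_of]
    have hpq0 : pq ≠ (0, 0) := by
      intro hc; exact hα (hc ▸ hz x)
    have hge : 1 ≤ pq.1 + pq.2 := by
      rcases Nat.eq_zero_or_pos (pq.1 + pq.2) with h0 | h0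
      · exfalso; apply hpq0
        have : pq.1 = 0 ∧ pq.2 = 0 := by omega
        exact Prod.ext this.1 this.2
      · omega
    have hlw : (FreeMonoid.of x * xs).length = 1 + xs.length := by
      rw [FreeMonoid.length_mul, FreeMonoid.length_of]
    omega


/-- Over a field `K`, the morphism `c_α` is locally finite — i.e. for
every pair of words `(u,v)` the set `{w : ⟨u⊗v | c_α(w)⟩ ≠ 0}` is finite — if and only
if `α_{0,0}(a) = 0` for every letter `a`. -/
theorem stmt_6 {K A : Type*} [Field K] [Fintype A] (α : A → (ℕ × ℕ) →₀ K) :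
    (∀ u v : FreeMonoid A, {w : FreeMonoid A | (cExt α w).coeff (u, v) ≠ 0}.Finite) ↔
      ∀ a : A, α a (0, 0) = 0 := by
  constructor
  · intro hfin a
    by_contra h
    have hinf : {w : FreeMonoid A | (cExt α w).coeff (1, 1) ≠ 0}.Infinite := by
      apply Set.infinite_of_injective_forall_mem
        (f := fun n : ℕ => FreeMonoid.of a ^ n)
      · intro m n hmn
        have := congrArg FreeMonoid.length hmn
        simpa [FreeMonoid.length_pow', FreeMonoid.length_of] using this
      · intro n
        show (cExt α (FreeMonoid.of a ^ n)).coeff (1, 1) ≠ 0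
        rw [map_pow, cExt, FreeMonoid.lift_eval_of]
        have h11 : ((1, 1) : FreeMonoid A × FreeMonoid A) = 1 := rfl
        rw [h11, pow_coeff_one, calpha_apply_one]
        exact pow_ne_zero n h
    exact hinf (hfin 1 1)
  · intro hz u v
    have hsub : {w : FreeMonoid A | (cExt α w).coeff (u, v) ≠ 0} ⊆
        {w : FreeMonoid A | w.length ≤ u.length + v.length} := by
      intro w hw
      exact cExt_length_le α hz w u v hw
    apply Set.Finite.subset _ hsub
    have : {l : List A | l.length ≤ u.length + v.length}.Finite :=
      List.finite_length_le A (u.length + v.length)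
    exact this
end

section
/- Let K be a commutative semiring and A a finite alphabet. Let R be a formal series with linear representation (λ₁, μ₁, γ₁) of dimension n and S a formal series with linear representation (λ₂, μ₂, γ₂) of dimension m. Let μ : A* → K^{nm×nm} be the monoid morphism determined on letters by μ(a) = μ₁(a) ⊗ I_m + I_n ⊗ μ₂(a) + μ₁(a) ⊗ μ₂(a). Then (λ₁⊗λ₂, μ, γ₁⊗γ₂) is a linear representation of the infiltration product R ↑ S, i.e. (λ₁⊗λ₂) μ(w) (γ₁⊗γ₂) = Σ_{I∪J={1,…,|w|}} ⟨R|w[I]⟩⟨S|w[J]⟩ for every word w ∈ A*, the sum over ordered pairs (I,J) of subsets whose union is all the positions of w (overlaps allowed). -/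
open Matrix
open scoped Kronecker

/-- The subword `w[I]` of `w` in the positions belonging to `I`, in order. -/
def subword {A : Type*} (w : List A) (I : Finset (Fin w.length)) : List A :=
  ((List.finRange w.length).filter (fun i => i ∈ I)).map w.get

/-- The infiltration product of two series:
`⟨R ↑ S | w⟩ = Σ_{I ∪ J = {1,…,|w|}} ⟨R|w[I]⟩⟨S|w[J]⟩`, the sum over ordered pairs
`(I, J)` of sets of positions whose union is everything (overlaps allowed). -/
def inflSer {K A : Type*} [CommSemiring K] (R S : List A → K) : List A → K :=
  fun w =>
    ∑ p ∈ Finset.univ.filter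
        (fun p : Finset (Fin w.length) × Finset (Fin w.length) =>
          p.1 ∪ p.2 = Finset.univ),
      R (subword w p.1) * S (subword w p.2)

namespace Stmt9Aux

/-! ### Finset combinatorics on `Fin (k+1)` -/

/-- Insert `0` and shift a set of positions up by one. -/
def ins {k : ℕ} (I : Finset (Fin k)) : Finset (Fin (k+1)) := insert 0 (I.map (Fin.succEmb k))

/-- Shift a set of positions up by one (no `0`). -/
def mp {k : ℕ} (I : Finset (Fin k)) : Finset (Fin (k+1)) := I.map (Fin.succEmb k)

/-- Remove `0` and shift down by one. -/
noncomputable def desc {k : ℕ} (I : Finset (Fin (k+1))) : Finset (Fin k) :=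
  I.preimage Fin.succ ((Fin.succ_injective _).injOn)

@[simp] lemma mem_desc {k} {I : Finset (Fin (k+1))} {i : Fin k} : i ∈ desc I ↔ i.succ ∈ I :=
  Finset.mem_preimage

@[simp] lemma succ_mem_ins {k} {I : Finset (Fin k)} {i : Fin k} : i.succ ∈ ins I ↔ i ∈ I := by
  simp [ins, Fin.succEmb, Fin.succ_ne_zero]

@[simp] lemma zero_mem_ins {k} (I : Finset (Fin k)) : (0 : Fin (k+1)) ∈ ins I :=
  Finset.mem_insert_self _ _

@[simp] lemma succ_mem_mp {k} {I : Finset (Fin k)} {i : Fin k} : i.succ ∈ mp I ↔ i ∈ I := by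
  simp [mp, Fin.succEmb, (Fin.succ_injective k).eq_iff]

@[simp] lemma zero_not_mem_mp {k} (I : Finset (Fin k)) : (0 : Fin (k+1)) ∉ mp I := by
  simp [mp, Fin.succEmb]

@[simp] lemma desc_ins {k} (I : Finset (Fin k)) : desc (ins I) = I := by ext i; simp

@[simp] lemma desc_mp {k} (I : Finset (Fin k)) : desc (mp I) = I := by ext i; simp

lemma ins_desc {k} {I : Finset (Fin (k+1))} (h : (0 : Fin (k+1)) ∈ I) : ins (desc I) = I := by
  ext x; refine Fin.cases ?_ ?_ x <;> simp [h]

lemma mp_desc {k} {I : Finset (Fin (k+1))} (h : (0 : Fin (k+1)) ∉ I) : mp (desc I) = I := by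
  ext x; refine Fin.cases ?_ ?_ x <;> simp [h]

lemma union_desc {k} {I J : Finset (Fin (k+1))} (h : I ∪ J = Finset.univ) :
    desc I ∪ desc J = Finset.univ := by
  ext i
  have : i.succ ∈ I ∪ J := h ▸ Finset.mem_univ _
  simpa using this

lemma ins_union_mp {k} {I J : Finset (Fin k)} (h : I ∪ J = Finset.univ) :
    ins I ∪ mp J = Finset.univ := by
  ext x; refine Fin.cases ?_ ?_ x <;> simp
  intro i
  have : i ∈ I ∪ J := h ▸ Finset.mem_univ _
  simpa using this

lemma mp_union_ins {k} {I J : Finset (Fin k)} (h : I ∪ J = Finset.univ) :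
    mp I ∪ ins J = Finset.univ := by
  ext x; refine Fin.cases ?_ ?_ x <;> simp
  intro i
  have : i ∈ I ∪ J := h ▸ Finset.mem_univ _
  simpa using this

lemma ins_union_ins {k} {I J : Finset (Fin k)} (h : I ∪ J = Finset.univ) :
    ins I ∪ ins J = Finset.univ := by
  ext x; refine Fin.cases ?_ ?_ x <;> simp
  intro i
  have : i ∈ I ∪ J := h ▸ Finset.mem_univ _
  simpa using this

/-- Recursive decomposition of the sum over covering pairs of subsets. -/
lemma sum_pairs_succ {M : Type*} [AddCommMonoid M] {k : ℕ}
    (f : Finset (Fin (k+1)) × Finset (Fin (k+1)) → M) :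
    ∑ p ∈ Finset.univ.filter
        (fun p : Finset (Fin (k+1)) × Finset (Fin (k+1)) => p.1 ∪ p.2 = Finset.univ), f p
    = ∑ q ∈ Finset.univ.filter
        (fun q : Finset (Fin k) × Finset (Fin k) => q.1 ∪ q.2 = Finset.univ),
        (f (ins q.1, mp q.2) + f (mp q.1, ins q.2) + f (ins q.1, ins q.2)) := by
  classical
  set S := Finset.univ.filter
      (fun p : Finset (Fin (k+1)) × Finset (Fin (k+1)) => p.1 ∪ p.2 = Finset.univ) with hS
  set T := Finset.univ.filter
      (fun q : Finset (Fin k) × Finset (Fin k) => q.1 ∪ q.2 = Finset.univ) with hT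
  have h1 : ∑ p ∈ (S.filter (fun p => (0 : Fin (k+1)) ∈ p.1)).filter
      (fun p => (0 : Fin (k+1)) ∈ p.2), f p = ∑ q ∈ T, f (ins q.1, ins q.2) := by
    refine Finset.sum_nbij' (fun p => (desc p.1, desc p.2))
      (fun q => (ins q.1, ins q.2)) ?_ ?_ ?_ ?_ ?_
    · intro p hp
      simp only [hS, hT, Finset.mem_filter, Finset.mem_univ, true_and] at hp ⊢
      exact union_desc hp.1.1
    · intro q hq
      simp only [hS, hT, Finset.mem_filter, Finset.mem_univ, true_and] at hq ⊢
      exact ⟨⟨ins_union_ins hq, zero_mem_ins _⟩, zero_mem_ins _⟩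
    · intro p hp
      simp only [hS, Finset.mem_filter, Finset.mem_univ, true_and] at hp
      simp [ins_desc hp.1.2, ins_desc hp.2]
    · intro q hq; simp
    · intro p hp
      simp only [hS, Finset.mem_filter, Finset.mem_univ, true_and] at hp
      simp only []
      rw [ins_desc hp.1.2, ins_desc hp.2]
  have h2 : ∑ p ∈ (S.filter (fun p => (0 : Fin (k+1)) ∈ p.1)).filter
      (fun p => ¬ (0 : Fin (k+1)) ∈ p.2), f p = ∑ q ∈ T, f (ins q.1, mp q.2) := by
    refine Finset.sum_nbij' (fun p => (desc p.1, desc p.2))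
      (fun q => (ins q.1, mp q.2)) ?_ ?_ ?_ ?_ ?_
    · intro p hp
      simp only [hS, hT, Finset.mem_filter, Finset.mem_univ, true_and] at hp ⊢
      exact union_desc hp.1.1
    · intro q hq
      simp only [hS, hT, Finset.mem_filter, Finset.mem_univ, true_and] at hq ⊢
      exact ⟨⟨ins_union_mp hq, zero_mem_ins _⟩, zero_not_mem_mp _⟩
    · intro p hp
      simp only [hS, Finset.mem_filter, Finset.mem_univ, true_and] at hp
      simp [ins_desc hp.1.2, mp_desc hp.2]
    · intro q hq; simp
    · intro p hp
      simp only [hS, Finset.mem_filter, Finset.mem_univ, true_and] at hp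
      simp only []
      rw [ins_desc hp.1.2, mp_desc hp.2]
  have h3 : ∑ p ∈ S.filter (fun p => ¬ (0 : Fin (k+1)) ∈ p.1), f p
      = ∑ q ∈ T, f (mp q.1, ins q.2) := by
    refine Finset.sum_nbij' (fun p => (desc p.1, desc p.2))
      (fun q => (mp q.1, ins q.2)) ?_ ?_ ?_ ?_ ?_
    · intro p hp
      simp only [hS, hT, Finset.mem_filter, Finset.mem_univ, true_and] at hp ⊢
      exact union_desc hp.1
    · intro q hq
      simp only [hS, hT, Finset.mem_filter, Finset.mem_univ, true_and] at hq ⊢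
      exact ⟨mp_union_ins hq, zero_not_mem_mp _⟩
    · intro p hp
      simp only [hS, Finset.mem_filter, Finset.mem_univ, true_and] at hp
      have hz : (0 : Fin (k+1)) ∈ p.2 := by
        have : (0 : Fin (k+1)) ∈ p.1 ∪ p.2 := hp.1 ▸ Finset.mem_univ _
        rcases Finset.mem_union.mp this with h | h
        · exact absurd h hp.2
        · exact h
      simp [mp_desc hp.2, ins_desc hz]
    · intro q hq; simp
    · intro p hp
      simp only [hS, Finset.mem_filter, Finset.mem_univ, true_and] at hp
      have hz : (0 : Fin (k+1)) ∈ p.2 := by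
        have : (0 : Fin (k+1)) ∈ p.1 ∪ p.2 := hp.1 ▸ Finset.mem_univ _
        rcases Finset.mem_union.mp this with h | h
        · exact absurd h hp.2
        · exact h
      simp only []
      rw [mp_desc hp.2, ins_desc hz]
  rw [← Finset.sum_filter_add_sum_filter_not S (fun p => (0 : Fin (k+1)) ∈ p.1) f,
    ← Finset.sum_filter_add_sum_filter_not (S.filter (fun p => (0 : Fin (k+1)) ∈ p.1))
      (fun p => (0 : Fin (k+1)) ∈ p.2) f, h1, h2, h3,
    Finset.sum_add_distrib, Finset.sum_add_distrib]
  abel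

/-! ### `subword` lemmas -/

lemma subword_cons_ins {A : Type*} (a : A) (t : List A) (I : Finset (Fin t.length)) :
    subword (a :: t) (ins I) = a :: subword t I := by
  simp only [subword]
  have h : List.finRange (a :: t).length = 0 :: (List.finRange t.length).map Fin.succ :=
    List.finRange_succ (n := t.length)
  rw [h, List.filter_cons, List.filter_map]
  simp [Function.comp_def, List.map_map]

lemma subword_cons_mp {A : Type*} (a : A) (t : List A) (I : Finset (Fin t.length)) :
    subword (a :: t) (mp I) = subword t I := by
  simp only [subword]
  have h : List.finRange (a :: t).length = 0 :: (List.finRange t.length).map Fin.succ :=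
    List.finRange_succ (n := t.length)
  rw [h, List.filter_cons, List.filter_map]
  simp [Function.comp_def, List.map_map]

@[simp] lemma wordMat_nil {K A : Type*} [Semiring K] {d : Type*} [Fintype d] [DecidableEq d]
    (μ : A → Matrix d d K) : wordMat μ ([] : List A) = 1 := rfl

@[simp] lemma wordMat_cons {K A : Type*} [Semiring K] {d : Type*} [Fintype d] [DecidableEq d]
    (μ : A → Matrix d d K) (a : A) (w : List A) :
    wordMat μ (a :: w) = μ a * wordMat μ w := by simp [wordMat]

/-! ### linear algebra helpers -/

lemma sum_mulVec {K : Type*} [NonUnitalNonAssocSemiring K] {d ι : Type*} [Fintype d]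
    (s : Finset ι) (M : ι → Matrix d d K) (v : d → K) :
    (∑ p ∈ s, M p) *ᵥ v = ∑ p ∈ s, M p *ᵥ v := by
  ext i
  simp only [Matrix.mulVec, dotProduct, Matrix.sum_apply, Finset.sum_mul, Finset.sum_apply]
  exact Finset.sum_comm

lemma dotProduct_sum' {K : Type*} [NonUnitalNonAssocSemiring K] {d ι : Type*} [Fintype d]
    (s : Finset ι) (u : d → K) (v : ι → d → K) :
    u ⬝ᵥ (∑ p ∈ s, v p) = ∑ p ∈ s, u ⬝ᵥ v p := by
  simp [dotProduct, Finset.mul_sum, Finset.sum_apply]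
  exact Finset.sum_comm

lemma dot_kron {K : Type*} [CommSemiring K] {n m : ℕ}
    (lam₁ : Fin n → K) (gam₁ : Fin n → K) (lam₂ : Fin m → K) (gam₂ : Fin m → K)
    (M : Matrix (Fin n) (Fin n) K) (N : Matrix (Fin m) (Fin m) K) :
    (fun ij : Fin n × Fin m => lam₁ ij.1 * lam₂ ij.2) ⬝ᵥ
      ((M ⊗ₖ N) *ᵥ fun ij : Fin n × Fin m => gam₁ ij.1 * gam₂ ij.2)
    = (lam₁ ⬝ᵥ (M *ᵥ gam₁)) * (lam₂ ⬝ᵥ (N *ᵥ gam₂)) := by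
  simp only [dotProduct, mulVec, kroneckerMap_apply, Fintype.sum_prod_type]
  rw [Finset.sum_mul_sum]
  refine Finset.sum_congr rfl fun i _ => Finset.sum_congr rfl fun j _ => ?_
  simp only [Finset.mul_sum, Finset.sum_mul]
  rw [Finset.sum_comm]
  refine Finset.sum_congr rfl fun a _ => Finset.sum_congr rfl fun b _ => ?_
  ring

/-! ### the key matrix identity -/

lemma wordMat_infl {K A : Type*} [CommSemiring K] {n m : ℕ}
    (μ₁ : A → Matrix (Fin n) (Fin n) K) (μ₂ : A → Matrix (Fin m) (Fin m) K)
    (w : List A) :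
    wordMat (fun a => μ₁ a ⊗ₖ (1 : Matrix (Fin m) (Fin m) K)
        + (1 : Matrix (Fin n) (Fin n) K) ⊗ₖ μ₂ a + μ₁ a ⊗ₖ μ₂ a) w
    = ∑ p ∈ Finset.univ.filter
        (fun p : Finset (Fin w.length) × Finset (Fin w.length) => p.1 ∪ p.2 = Finset.univ),
        wordMat μ₁ (subword w p.1) ⊗ₖ wordMat μ₂ (subword w p.2) := by
  induction w with
  | nil =>
      haveI : Subsingleton (Finset (Fin ([] : List A).length)) :=
        ⟨fun a b => by ext x; exact x.elim0⟩
      rw [show (Finset.univ.filter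
          (fun p : Finset (Fin ([] : List A).length) × Finset (Fin ([] : List A).length) =>
            p.1 ∪ p.2 = Finset.univ)) = {((∅ : Finset (Fin 0)), (∅ : Finset (Fin 0)))} by
        ext p
        simp [Subsingleton.elim p.1 ∅, Subsingleton.elim p.2 ∅,
          Subsingleton.elim (p.1 ∪ p.2) Finset.univ, Prod.ext_iff, Finset.union_eq_empty]]
      rw [Finset.sum_singleton]
      simp [wordMat, subword]
  | cons a t ih =>
      show (μ₁ a ⊗ₖ (1 : Matrix (Fin m) (Fin m) K)
            + (1 : Matrix (Fin n) (Fin n) K) ⊗ₖ μ₂ a + μ₁ a ⊗ₖ μ₂ a) *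
          wordMat (fun a => μ₁ a ⊗ₖ (1 : Matrix (Fin m) (Fin m) K)
            + (1 : Matrix (Fin n) (Fin n) K) ⊗ₖ μ₂ a + μ₁ a ⊗ₖ μ₂ a) t
        = ∑ p ∈ Finset.univ.filter
            (fun p : Finset (Fin (t.length + 1)) × Finset (Fin (t.length + 1)) =>
              p.1 ∪ p.2 = Finset.univ),
            wordMat μ₁ (subword (a :: t) p.1) ⊗ₖ wordMat μ₂ (subword (a :: t) p.2)
      rw [ih, Finset.mul_sum, sum_pairs_succ
        (fun p : Finset (Fin (t.length + 1)) × Finset (Fin (t.length + 1)) =>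
          wordMat μ₁ (subword (a :: t) p.1) ⊗ₖ wordMat μ₂ (subword (a :: t) p.2))]
      refine Finset.sum_congr rfl fun q hq => ?_
      simp only [subword_cons_ins, subword_cons_mp, wordMat_cons, add_mul,
        ← Matrix.mul_kronecker_mul, Matrix.one_mul, Matrix.mul_one]

end Stmt9Aux

open Stmt9Aux in
/-- If `(lam₁, μ₁, gam₁)` represents `R` and `(lam₂, μ₂, gam₂)`
represents `S`, then `(λ₁⊗λ₂, a ↦ μ₁(a)⊗I + I⊗μ₂(a) + μ₁(a)⊗μ₂(a), γ₁⊗γ₂)`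
represents the infiltration product `R ↑ S`. -/
theorem stmt_9 {K A : Type*} [CommSemiring K] [Fintype A] {n m : ℕ}
    (R S : List A → K)
    (lam₁ : Fin n → K) (μ₁ : A → Matrix (Fin n) (Fin n) K) (gam₁ : Fin n → K)
    (lam₂ : Fin m → K) (μ₂ : A → Matrix (Fin m) (Fin m) K) (gam₂ : Fin m → K)
    (hR : ∀ w, R w = lam₁ ⬝ᵥ (wordMat μ₁ w *ᵥ gam₁))
    (hS : ∀ w, S w = lam₂ ⬝ᵥ (wordMat μ₂ w *ᵥ gam₂)) :
    ∀ w : List A,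
      (fun ij : Fin n × Fin m => lam₁ ij.1 * lam₂ ij.2) ⬝ᵥ
        (wordMat (fun a => μ₁ a ⊗ₖ (1 : Matrix (Fin m) (Fin m) K)
              + (1 : Matrix (Fin n) (Fin n) K) ⊗ₖ μ₂ a
              + μ₁ a ⊗ₖ μ₂ a) w *ᵥ
          fun ij : Fin n × Fin m => gam₁ ij.1 * gam₂ ij.2)
        = inflSer R S w := by
  intro w
  rw [wordMat_infl, Stmt9Aux.sum_mulVec, dotProduct_sum']
  unfold inflSer
  refine Finset.sum_congr rfl fun p hp => ?_
  rw [hR, hS, dot_kron]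
end

section
/- Let K be a commutative semiring and A a finite alphabet. Let R be a formal series with linear representation (λ₁, μ₁, γ₁) of dimension n and S a formal series with linear representation (λ₂, μ₂, γ₂) of dimension m. Let μ : A* → K^{nm×nm} be the monoid morphism determined on letters by μ(a) = μ₁(a) ⊗ μ₂(a) (Kronecker product). Then (λ₁⊗λ₂, μ, γ₁⊗γ₂) is a linear representation of the Hadamard product R ⊙ S, i.e. (λ₁⊗λ₂) μ(w) (γ₁⊗γ₂) = ⟨R|w⟩⟨S|w⟩ for every word w ∈ A*. -/
open Matrix
open scoped Kronecker

lemma wordMat_kron {K A : Type*} [CommSemiring K] {n m : ℕ}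
    (μ₁ : A → Matrix (Fin n) (Fin n) K) (μ₂ : A → Matrix (Fin m) (Fin m) K)
    (w : List A) :
    wordMat (fun a => μ₁ a ⊗ₖ μ₂ a) w = wordMat μ₁ w ⊗ₖ wordMat μ₂ w := by
  induction w with
  | nil => simp [wordMat, Matrix.one_kronecker_one]
  | cons a t ih =>
      simp [wordMat, List.map_cons, List.prod_cons] at *
      rw [ih, Matrix.mul_kronecker_mul]

lemma dot_kron {K : Type*} [CommSemiring K] {n m : ℕ}
    (u x : Fin n → K) (v y : Fin m → K)
    (M : Matrix (Fin n) (Fin n) K) (N : Matrix (Fin m) (Fin m) K) :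
    (fun ij : Fin n × Fin m => u ij.1 * v ij.2) ⬝ᵥ
        ((M ⊗ₖ N) *ᵥ fun ij : Fin n × Fin m => x ij.1 * y ij.2)
      = (u ⬝ᵥ (M *ᵥ x)) * (v ⬝ᵥ (N *ᵥ y)) := by
  simp only [dotProduct, mulVec, dotProduct, kroneckerMap_apply, Fintype.sum_prod_type]
  rw [Finset.sum_mul_sum]
  apply Finset.sum_congr rfl; intro i _
  apply Finset.sum_congr rfl; intro j _
  rw [mul_mul_mul_comm, Finset.sum_mul_sum]
  congr 1
  apply Finset.sum_congr rfl; intro k _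
  apply Finset.sum_congr rfl; intro l _
  ring

/-- If `(lam₁, μ₁, gam₁)` represents `R` and `(lam₂, μ₂, gam₂)`
represents `S`, then `(λ₁⊗λ₂, a ↦ μ₁(a)⊗μ₂(a), γ₁⊗γ₂)` represents the Hadamard
(pointwise) product `R ⊙ S`: its coefficient at each word `w` is `⟨R|w⟩⟨S|w⟩`. -/
theorem stmt_10 {K A : Type*} [CommSemiring K] [Fintype A] {n m : ℕ}
    (R S : List A → K)
    (lam₁ : Fin n → K) (μ₁ : A → Matrix (Fin n) (Fin n) K) (gam₁ : Fin n → K)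
    (lam₂ : Fin m → K) (μ₂ : A → Matrix (Fin m) (Fin m) K) (gam₂ : Fin m → K)
    (hR : ∀ w, R w = lam₁ ⬝ᵥ (wordMat μ₁ w *ᵥ gam₁))
    (hS : ∀ w, S w = lam₂ ⬝ᵥ (wordMat μ₂ w *ᵥ gam₂)) :
    ∀ w : List A,
      (fun ij : Fin n × Fin m => lam₁ ij.1 * lam₂ ij.2) ⬝ᵥ
        (wordMat (fun a => μ₁ a ⊗ₖ μ₂ a) w *ᵥ
          fun ij : Fin n × Fin m => gam₁ ij.1 * gam₂ ij.2)
        = R w * S w := by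
  intro w
  rw [hR, hS, wordMat_kron, dot_kron]
end

section
/- Work over the field ℚ with a one-letter alphabet {a}. For n ≥ 1 let S_n be the series with ⟨S_n|a^p⟩ = 1 if n divides p and 0 otherwise (i.e. S_n = Σ_{k≥0} a^{nk} = 1/(1-a^n)). Then: (1) the rank of S_n is n; (2) the Hadamard product satisfies S_n ⊙ S_m = S_{lcm(n,m)}; (3) consequently, if n and m are coprime then the rank of S_n ⊙ S_m is nm, so the dimension bound nm for the Hadamard product of representations of dimensions n and m is asymptotically sharp. -/
open Matrix

/-- A series over the one-letter alphabet `{a}` (identified with `ℕ → ℚ` via `a^p ↦ p`)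
admits a linear representation of dimension `d` iff there are `lam, M, gam` with
`⟨S|a^p⟩ = lam Mᵖ gam` for all `p`. -/
def hasRep1 (S : ℕ → ℚ) (d : ℕ) : Prop :=
  ∃ (lam : Fin d → ℚ) (M : Matrix (Fin d) (Fin d) ℚ) (gam : Fin d → ℚ),
    ∀ p : ℕ, S p = lam ⬝ᵥ ((M ^ p) *ᵥ gam)

/-- The rank of a series: the minimal dimension of a linear representation. -/
noncomputable def rank1 (S : ℕ → ℚ) : ℕ := sInf {d | hasRep1 S d}

/-- The series `S_n = Σ_{k≥0} a^{nk} = 1/(1-a^n)`: coefficient `1` at `a^p` iff `n ∣ p`. -/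
def Sdiv (n : ℕ) : ℕ → ℚ := fun p => if n ∣ p then 1 else 0

open Fin.NatCast in
/-- Upper bound: the cyclic-shift representation of dimension `n`. -/
lemma hasRep1_Sdiv (n : ℕ) (hn : 1 ≤ n) : hasRep1 (Sdiv n) n := by
  haveI : NeZero n := ⟨by omega⟩
  set M : Matrix (Fin n) (Fin n) ℚ := fun i j => if j = i + 1 then 1 else 0 with hM
  refine ⟨fun i => if i = 0 then 1 else 0, M, fun i => if i = 0 then 1 else 0, ?_⟩
  have step : ∀ (v : Fin n → ℚ) (i : Fin n), (M *ᵥ v) i = v (i + 1) := by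
    intro v i
    simp [Matrix.mulVec, dotProduct, hM]
  have key : ∀ (p : ℕ) (v : Fin n → ℚ) (i : Fin n),
      ((M ^ p) *ᵥ v) i = v (i + (p : Fin n)) := by
    intro p
    induction p with
    | zero => intro v i; simp [Matrix.mulVec, dotProduct, Matrix.one_apply]
    | succ p ih =>
      intro v i
      rw [pow_succ', ← Matrix.mulVec_mulVec, step, ih]
      congr 1
      push_cast
      rw [add_assoc, add_comm (1 : Fin n)]
  intro p
  have hdp : (fun i => if i = 0 then (1:ℚ) else 0) ⬝ᵥ ((M ^ p) *ᵥ fun i => if i = 0 then (1:ℚ) else 0)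
      = ((M ^ p) *ᵥ fun i => if i = 0 then (1:ℚ) else 0) 0 := by
    simp [dotProduct]
  rw [hdp, key]
  simp only [zero_add]
  unfold Sdiv
  by_cases h : n ∣ p
  · rw [if_pos h, if_pos (Fin.natCast_eq_zero.mpr h)]
  · rw [if_neg h, if_neg (fun hc => h (Fin.natCast_eq_zero.mp hc))]

/-- Lower bound: any representation of `Sdiv n` has dimension at least `n`. -/
lemma le_of_hasRep1_Sdiv (n d : ℕ) (hn : 1 ≤ n) (h : hasRep1 (Sdiv n) d) : n ≤ d := by
  obtain ⟨lam, M, gam, hrep⟩ := h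
  set w : Fin n → (Fin d → ℚ) := fun k => (M ^ (k : ℕ)) *ᵥ gam with hw
  have hli : LinearIndependent ℚ w := by
    rw [Fintype.linearIndependent_iff]
    intro g hg k'
    have key : ∀ p : ℕ, ∑ k : Fin n, g k * Sdiv n (p + k.val) = 0 := by
      intro p
      let L : (Fin d → ℚ) →ₗ[ℚ] ℚ :=
        { toFun := fun x => lam ⬝ᵥ ((M ^ p) *ᵥ x)
          map_add' := by intro x y; simp [Matrix.mulVec_add, dotProduct_add]
          map_smul' := by intro c x; simp [Matrix.mulVec_smul] }
      have hLw : ∀ k : Fin n, L (w k) = Sdiv n (p + k.val) := by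
        intro k
        have : L (w k) = lam ⬝ᵥ ((M ^ (p + k.val)) *ᵥ gam) := by
          simp only [L, hw, LinearMap.coe_mk, AddHom.coe_mk]
          rw [Matrix.mulVec_mulVec, ← pow_add]
        rw [this, ← hrep]
      calc ∑ k : Fin n, g k * Sdiv n (p + k.val)
          = ∑ k : Fin n, g k • L (w k) := by
            simp only [smul_eq_mul]
            exact Finset.sum_congr rfl fun k _ => by rw [hLw]
        _ = L (∑ k : Fin n, g k • w k) := by rw [map_sum]; simp
        _ = 0 := by rw [hg, map_zero]
    have hval : ∀ k : Fin n, Sdiv n ((n - k'.val) + k.val) = if k = k' then 1 else 0 := by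
      intro k
      unfold Sdiv
      by_cases hkk : k = k'
      · subst hkk
        have : n - k.val + k.val = n := by omega
        rw [this, if_pos dvd_rfl, if_pos rfl]
      · rw [if_neg hkk, if_neg]
        intro hdvd
        obtain ⟨c, hc⟩ := hdvd
        have hk : k.val < n := k.isLt
        have hk' : k'.val < n := k'.isLt
        have h1 : 1 ≤ n - k'.val + k.val := by omega
        have h2 : n - k'.val + k.val < 2 * n := by omega
        have hc1 : c ≠ 0 := by rintro rfl; omega
        have hc2 : c < 2 := by
          by_contra hc2
          push_neg at hc2
          have : 2 * n ≤ n * c := by calc 2 * n = n * 2 := by ring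
                                          _ ≤ n * c := Nat.mul_le_mul_left n hc2
          omega
        have hc3 : c = 1 := by omega
        subst hc3
        have : n - k'.val + k.val = n := by omega
        have hkv : k.val = k'.val := by omega
        exact hkk (Fin.ext hkv)
    have := key (n - k'.val)
    rw [Finset.sum_congr rfl (fun k _ => by rw [hval k])] at this
    simpa using this
  have hcard := hli.fintype_card_le_finrank
  simpa [Module.finrank_fin_fun] using hcard

lemma rank1_Sdiv (n : ℕ) (hn : 1 ≤ n) : rank1 (Sdiv n) = n := by
  have mem : hasRep1 (Sdiv n) n := hasRep1_Sdiv n hn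
  have h1 : rank1 (Sdiv n) ≤ n := Nat.sInf_le mem
  have hne : {d | hasRep1 (Sdiv n) d}.Nonempty := ⟨n, mem⟩
  have h2 : n ≤ rank1 (Sdiv n) :=
    le_of_hasRep1_Sdiv n _ hn (Nat.sInf_mem hne)
  omega

/-- (1) `S_n` has rank `n`; (2) the Hadamard (pointwise) product
satisfies `S_n ⊙ S_m = S_{lcm(n,m)}`; (3) for `n, m` coprime the rank of `S_n ⊙ S_m`
is `nm`, so the bound `nm` for the Hadamard product is (asymptotically) sharp. -/
theorem stmt_12 (n m : ℕ) (hn : 1 ≤ n) (hm : 1 ≤ m) :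
    rank1 (Sdiv n) = n ∧
    (∀ p : ℕ, Sdiv n p * Sdiv m p = Sdiv (Nat.lcm n m) p) ∧
    (Nat.Coprime n m → rank1 (fun p => Sdiv n p * Sdiv m p) = n * m) := by
  have hHad : ∀ p : ℕ, Sdiv n p * Sdiv m p = Sdiv (Nat.lcm n m) p := by
    intro p
    unfold Sdiv
    by_cases h1 : n ∣ p <;> by_cases h2 : m ∣ p
    · rw [if_pos h1, if_pos h2, if_pos (Nat.lcm_dvd h1 h2), one_mul]
    · rw [if_pos h1, if_neg h2, if_neg (fun hl => h2 ((Nat.dvd_lcm_right n m).trans hl)), mul_zero]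
    · rw [if_neg h1, if_pos h2, if_neg (fun hl => h1 ((Nat.dvd_lcm_left n m).trans hl)), zero_mul]
    · rw [if_neg h1, if_neg h2, if_neg (fun hl => h1 ((Nat.dvd_lcm_left n m).trans hl)), mul_zero]
  refine ⟨rank1_Sdiv n hn, hHad, ?_⟩
  intro hcop
  have hfun : (fun p => Sdiv n p * Sdiv m p) = Sdiv (n * m) := by
    funext p
    rw [hHad p, hcop.lcm_eq_mul]
  rw [hfun]
  exact rank1_Sdiv (n * m) (Nat.one_le_iff_ne_zero.mpr (by positivity))
end

section
/- Let K be a division ring (a commutative or skew field), A a finite alphabet, ≡ a monoid congruence on A*, and S : A* → K a rational series (one admitting a finite-dimensional linear representation). Then the following are equivalent: (1) S is ≡-compatible, i.e. u ≡ v implies ⟨S|u⟩ = ⟨S|v⟩; (2) every minimal linear representation (λ, μ, γ) of S is ≡-compatible, i.e. u ≡ v implies μ(u) = μ(v). -/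
open Matrix

/-- The multiplicative extension of the letter matrices `μ` to words. -/
def liftMu {K A : Type*} [Semiring K] {d : ℕ} (μ : A → Matrix (Fin d) (Fin d) K) :
    FreeMonoid A →* Matrix (Fin d) (Fin d) K :=
  FreeMonoid.lift μ

/-- A series admits a linear representation of dimension `d`. -/
def hasRepF {K A : Type*} [Semiring K] (S : FreeMonoid A → K) (d : ℕ) : Prop :=
  ∃ (lam : Fin d → K) (μ : A → Matrix (Fin d) (Fin d) K) (gam : Fin d → K),
    ∀ w, S w = lam ⬝ᵥ (liftMu μ w *ᵥ gam)

section Aux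

open MulOpposite

variable {K A : Type*} [DivisionRing K]

@[simp] lemma liftMu_of {d : ℕ} (μ : A → Matrix (Fin d) (Fin d) K) (a : A) :
    liftMu μ (FreeMonoid.of a) = μ a := FreeMonoid.lift_eval_of μ a

/-- `Fin n → K` as a right `K`-module (i.e. `Kᵐᵒᵖ`-module) is linearly equivalent to
`Fin n → Kᵐᵒᵖ`. -/
def opPiEquiv (K : Type*) [DivisionRing K] (n : ℕ) : (Fin n → K) ≃ₗ[Kᵐᵒᵖ] (Fin n → Kᵐᵒᵖ) where
  toFun x i := op (x i)
  invFun y i := unop (y i)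
  map_add' x y := by funext i; simp
  map_smul' c x := by
    funext i
    show op (x i * unop c) = c * op (x i)
    simp
  left_inv x := by funext i; simp
  right_inv y := by funext i; simp

/-- `mulVec` as a `Kᵐᵒᵖ`-linear map. -/
def mulVecOp {n : ℕ} (M : Matrix (Fin n) (Fin n) K) :
    (Fin n → K) →ₗ[Kᵐᵒᵖ] (Fin n → K) where
  toFun x := M *ᵥ x
  map_add' x y := Matrix.mulVec_add M x y
  map_smul' c x := by
    funext j
    show (M *ᵥ fun i => x i * unop c) j = (M *ᵥ x) j * unop c
    simp [Matrix.mulVec, dotProduct, Finset.sum_mul, mul_assoc]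

@[simp] lemma mulVecOp_apply {n : ℕ} (M : Matrix (Fin n) (Fin n) K) (x : Fin n → K) :
    mulVecOp M x = M *ᵥ x := rfl

/-- `dotProduct` with a fixed left vector as a `Kᵐᵒᵖ`-linear map. -/
def dotOp {n : ℕ} (v : Fin n → K) : (Fin n → K) →ₗ[Kᵐᵒᵖ] K where
  toFun x := v ⬝ᵥ x
  map_add' x y := dotProduct_add v x y
  map_smul' c x := by
    show (v ⬝ᵥ fun i => x i * unop c) = (v ⬝ᵥ x) * unop c
    simp [dotProduct, Finset.sum_mul, mul_assoc]

@[simp] lemma dotOp_apply {n : ℕ} (v x : Fin n → K) : dotOp v x = v ⬝ᵥ x := rfl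

/-- Left reduction: if the row span of a representation is not everything, there is a
smaller representation. -/
theorem reduce_left {n : ℕ} (S : FreeMonoid A → K) (lam : Fin n → K)
    (μ : A → Matrix (Fin n) (Fin n) K) (gam : Fin n → K)
    (h : ∀ w, S w = lam ⬝ᵥ (liftMu μ w *ᵥ gam))
    (hW : Submodule.span K (Set.range fun w => lam ᵥ* liftMu μ w) ≠ ⊤) :
    ∃ d, d < n ∧ hasRepF S d := by
  set W := Submodule.span K (Set.range fun w => lam ᵥ* liftMu μ w) with hWdef
  have hgen : ∀ w : FreeMonoid A, lam ᵥ* liftMu μ w ∈ W :=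
    fun w => Submodule.subset_span ⟨w, rfl⟩
  have hstab : ∀ (a : A) (x : W), (x : Fin n → K) ᵥ* μ a ∈ W := by
    intro a x
    have hle : W ≤ Submodule.comap ((μ a).vecMulLinear) W := by
      rw [hWdef, Submodule.span_le]
      rintro _ ⟨w, rfl⟩
      simp only [SetLike.mem_coe, Submodule.mem_comap, Matrix.vecMulLinear_apply]
      have : lam ᵥ* liftMu μ w ᵥ* μ a = lam ᵥ* liftMu μ (w * FreeMonoid.of a) := by
        rw [_root_.map_mul, liftMu_of, Matrix.vecMul_vecMul]
      rw [this]
      exact hgen _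
    simpa using hle x.2
  set m := Module.finrank K W with hm
  have hmn : m < n := by
    have := Submodule.finrank_lt (K := K) hW
    rwa [Module.finrank_fin_fun] at this
  let b : Module.Basis (Fin m) K W := Module.finBasis K W
  set φ : (Fin m → K) → (Fin n → K) := fun c => ∑ j, c j • (b j : Fin n → K) with hφdef
  have hcoe : ∀ x : W, φ (fun j => b.repr x j) = (x : Fin n → K) := by
    intro x
    have := congrArg (Subtype.val) (b.sum_repr x)
    simp only [hφdef]
    rw [← this, Submodule.coe_sum]
    rfl
  set μ' : A → Matrix (Fin m) (Fin m) K :=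
    fun a j i => b.repr ⟨(b j : Fin n → K) ᵥ* μ a, hstab a (b j)⟩ i with hμ'def
  have hb : ∀ (a : A) (j : Fin m),
      (b j : Fin n → K) ᵥ* μ a = ∑ i, μ' a j i • (b i : Fin n → K) := by
    intro a j
    have := hcoe ⟨(b j : Fin n → K) ᵥ* μ a, hstab a (b j)⟩
    simpa [hφdef, hμ'def] using this.symm
  have hφmul : ∀ (c : Fin m → K) (a : A), φ c ᵥ* μ a = φ (c ᵥ* μ' a) := by
    intro c a
    have h1 : φ c ᵥ* μ a = ∑ j, c j • ((b j : Fin n → K) ᵥ* μ a) := by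
      simp only [hφdef]
      calc (∑ j, c j • (b j : Fin n → K)) ᵥ* μ a
          = (μ a).vecMulLinear (∑ j, c j • (b j : Fin n → K)) :=
            (Matrix.vecMulLinear_apply _ _).symm
        _ = ∑ j, c j • (μ a).vecMulLinear (b j : Fin n → K) := by
            simp only [map_sum, LinearMap.map_smul]
        _ = ∑ j, c j • ((b j : Fin n → K) ᵥ* μ a) := by
            simp only [Matrix.vecMulLinear_apply]
    rw [h1]
    simp only [hb, Finset.smul_sum, smul_smul]
    rw [Finset.sum_comm]
    simp only [hφdef]
    refine Finset.sum_congr rfl fun i _ => ?_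
    rw [← Finset.sum_smul]
    try congr 1
    try simp [Matrix.vecMul, Matrix.dotProduct]
  have hword : ∀ (w : FreeMonoid A) (c : Fin m → K),
      φ c ᵥ* liftMu μ w = φ (c ᵥ* liftMu μ' w) := by
    intro w
    refine FreeMonoid.recOn w ?_ ?_
    · intro c; simp [Matrix.vecMul_one]
    · intro a w ih c
      rw [_root_.map_mul, _root_.map_mul, liftMu_of, liftMu_of,
        ← Matrix.vecMul_vecMul, ← Matrix.vecMul_vecMul, hφmul, ih]
  have hlam : lam ∈ W := by
    have := hgen 1
    simpa [Matrix.vecMul_one] using this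
  set lam' : Fin m → K := fun j => b.repr ⟨lam, hlam⟩ j with hlam'def
  have hφlam : φ lam' = lam := hcoe ⟨lam, hlam⟩
  set gam' : Fin m → K := fun j => (b j : Fin n → K) ⬝ᵥ gam with hgam'def
  have hdot : ∀ c : Fin m → K, φ c ⬝ᵥ gam = c ⬝ᵥ gam' := by
    intro c
    simp only [hφdef, hgam'def, dotProduct, Finset.sum_apply, Pi.smul_apply,
      smul_eq_mul, Finset.sum_mul, Finset.mul_sum, mul_assoc]
    exact Finset.sum_comm
  refine ⟨m, hmn, lam', μ', gam', fun w => ?_⟩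
  rw [h w, Matrix.dotProduct_mulVec, Matrix.dotProduct_mulVec, ← hφlam, hword, hdot]

/-- Right reduction: if the column span of a representation is not everything, there is
a smaller representation. -/
theorem reduce_right {n : ℕ} (S : FreeMonoid A → K) (lam : Fin n → K)
    (μ : A → Matrix (Fin n) (Fin n) K) (gam : Fin n → K)
    (h : ∀ w, S w = lam ⬝ᵥ (liftMu μ w *ᵥ gam))
    (hV : Submodule.span Kᵐᵒᵖ (Set.range fun w => liftMu μ w *ᵥ gam) ≠ ⊤) :
    ∃ d, d < n ∧ hasRepF S d := by
  haveI : Module.Finite Kᵐᵒᵖ (Fin n → K) := Module.Finite.equiv (opPiEquiv K n).symm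
  have hrank : Module.finrank Kᵐᵒᵖ (Fin n → K) = n := by
    rw [(opPiEquiv K n).finrank_eq, Module.finrank_fin_fun]
  set V := Submodule.span Kᵐᵒᵖ (Set.range fun w => liftMu μ w *ᵥ gam) with hVdef
  have hgen : ∀ w : FreeMonoid A, liftMu μ w *ᵥ gam ∈ V :=
    fun w => Submodule.subset_span ⟨w, rfl⟩
  have hstab : ∀ (a : A) (x : V), μ a *ᵥ (x : Fin n → K) ∈ V := by
    intro a x
    have hle : V ≤ Submodule.comap (mulVecOp (μ a)) V := by
      rw [hVdef, Submodule.span_le]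
      rintro _ ⟨w, rfl⟩
      simp only [SetLike.mem_coe, Submodule.mem_comap, mulVecOp_apply]
      have : μ a *ᵥ (liftMu μ w *ᵥ gam) = liftMu μ (FreeMonoid.of a * w) *ᵥ gam := by
        rw [_root_.map_mul, liftMu_of, Matrix.mulVec_mulVec]
      rw [this]
      exact hgen _
    simpa using hle x.2
  set m := Module.finrank Kᵐᵒᵖ V with hm
  have hmn : m < n := by
    have := Submodule.finrank_lt (K := Kᵐᵒᵖ) hV
    rwa [hrank] at this
  let b : Module.Basis (Fin m) Kᵐᵒᵖ V := Module.finBasis Kᵐᵒᵖ V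
  set ψ : (Fin m → K) → (Fin n → K) := fun c => ∑ j, op (c j) • (b j : Fin n → K) with hψdef
  have hcoe : ∀ x : V, ψ (fun j => unop (b.repr x j)) = (x : Fin n → K) := by
    intro x
    have := congrArg (Subtype.val) (b.sum_repr x)
    simp only [hψdef]
    rw [← this, Submodule.coe_sum]
    rfl
  set μ' : A → Matrix (Fin m) (Fin m) K :=
    fun a i j => unop (b.repr ⟨μ a *ᵥ (b j : Fin n → K), hstab a (b j)⟩ i) with hμ'def
  have hb : ∀ (a : A) (j : Fin m),
      μ a *ᵥ (b j : Fin n → K) = ∑ i, op (μ' a i j) • (b i : Fin n → K) := by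
    intro a j
    have := hcoe ⟨μ a *ᵥ (b j : Fin n → K), hstab a (b j)⟩
    simpa [hψdef, hμ'def] using this.symm
  have hψmul : ∀ (c : Fin m → K) (a : A), μ a *ᵥ ψ c = ψ (μ' a *ᵥ c) := by
    intro c a
    have h1 : μ a *ᵥ ψ c = ∑ j, op (c j) • (μ a *ᵥ (b j : Fin n → K)) := by
      simp only [hψdef]
      calc μ a *ᵥ (∑ j, op (c j) • (b j : Fin n → K))
          = mulVecOp (μ a) (∑ j, op (c j) • (b j : Fin n → K)) := rfl
        _ = ∑ j, op (c j) • mulVecOp (μ a) (b j : Fin n → K) := by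
            simp only [map_sum, LinearMap.map_smul]
        _ = ∑ j, op (c j) • (μ a *ᵥ (b j : Fin n → K)) := by
            simp only [mulVecOp_apply]
    rw [h1]
    simp only [hb, Finset.smul_sum, smul_smul, ← op_mul]
    rw [Finset.sum_comm]
    simp only [hψdef]
    refine Finset.sum_congr rfl fun i _ => ?_
    rw [← Finset.sum_smul]
    congr 1
    rw [show (μ' a *ᵥ c) i = ∑ j, μ' a i j * c j from by
      simp [Matrix.mulVec, dotProduct]]
    exact (map_sum (opAddEquiv : K ≃+ Kᵐᵒᵖ) _ _).symm
  have hword : ∀ (w : FreeMonoid A) (c : Fin m → K),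
      liftMu μ w *ᵥ ψ c = ψ (liftMu μ' w *ᵥ c) := by
    intro w
    refine FreeMonoid.recOn w ?_ ?_
    · intro c; simp [Matrix.one_mulVec]
    · intro a w ih c
      rw [_root_.map_mul, _root_.map_mul, liftMu_of, liftMu_of,
        ← Matrix.mulVec_mulVec, ← Matrix.mulVec_mulVec, ih, hψmul]
  have hgam : gam ∈ V := by
    have := hgen 1
    simpa [Matrix.one_mulVec] using this
  set gam' : Fin m → K := fun j => unop (b.repr ⟨gam, hgam⟩ j) with hgam'def
  have hψgam : ψ gam' = gam := hcoe ⟨gam, hgam⟩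
  set lam' : Fin m → K := fun j => lam ⬝ᵥ (b j : Fin n → K) with hlam'def
  have hdot : ∀ c : Fin m → K, lam ⬝ᵥ ψ c = lam' ⬝ᵥ c := by
    intro c
    simp only [hψdef, hlam'def, dotProduct, Finset.sum_apply, Pi.smul_apply,
      op_smul_eq_mul, Finset.mul_sum, Finset.sum_mul, mul_assoc]
    exact Finset.sum_comm
  refine ⟨m, hmn, lam', μ', gam', fun w => ?_⟩
  rw [h w, ← hψgam, hword, hdot]

end Aux

/-- Let `K` be a division ring, `≡` a monoid congruence on `A*`, and
`S` a rational series. Then `S` is `≡`-compatible (`u ≡ v → ⟨S|u⟩ = ⟨S|v⟩`) iff every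
minimal linear representation `(λ, μ, γ)` of `S` is `≡`-compatible
(`u ≡ v → μ(u) = μ(v)`). -/
theorem stmt_13 {K A : Type*} [DivisionRing K] [Fintype A]
    (r : Con (FreeMonoid A)) (S : FreeMonoid A → K) (hS : ∃ d, hasRepF S d) :
    (∀ u v, r u v → S u = S v) ↔
      ∀ (n : ℕ) (lam : Fin n → K) (μ : A → Matrix (Fin n) (Fin n) K) (gam : Fin n → K),
        (∀ w, S w = lam ⬝ᵥ (liftMu μ w *ᵥ gam)) →
        (¬ ∃ d, d < n ∧ hasRepF S d) →
        ∀ u v, r u v → liftMu μ u = liftMu μ v := by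
  classical
  constructor
  · intro hcomp n lam μ gam h hmin u v huv
    have hW : Submodule.span K (Set.range fun w => lam ᵥ* liftMu μ w) = ⊤ := by
      by_contra hW
      exact hmin (reduce_left S lam μ gam h hW)
    have hV : Submodule.span Kᵐᵒᵖ (Set.range fun w => liftMu μ w *ᵥ gam) = ⊤ := by
      by_contra hV
      exact hmin (reduce_right S lam μ gam h hV)
    set N := liftMu μ u - liftMu μ v with hN
    have key : ∀ x y : FreeMonoid A,
        ((lam ᵥ* liftMu μ x) ᵥ* N) ⬝ᵥ (liftMu μ y *ᵥ gam) = 0 := by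
      intro x y
      have h1 : ∀ p : FreeMonoid A,
          ((lam ᵥ* liftMu μ x) ᵥ* liftMu μ p) ⬝ᵥ (liftMu μ y *ᵥ gam) = S (x * p * y) := by
        intro p
        rw [h, _root_.map_mul, _root_.map_mul, ← Matrix.mulVec_mulVec, ← Matrix.mulVec_mulVec,
          Matrix.dotProduct_mulVec, Matrix.dotProduct_mulVec, Matrix.dotProduct_mulVec,
          Matrix.dotProduct_mulVec]
      rw [hN, Matrix.vecMul_sub, sub_dotProduct, h1 u, h1 v, sub_eq_zero]
      exact hcomp _ _ (r.mul (r.mul (r.refl x) huv) (r.refl y))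
    have key2 : ∀ (x : Fin n → K) (y : FreeMonoid A),
        (x ᵥ* N) ⬝ᵥ (liftMu μ y *ᵥ gam) = 0 := by
      intro x y
      let L : (Fin n → K) →ₗ[K] K :=
        { toFun := fun z => (z ᵥ* N) ⬝ᵥ (liftMu μ y *ᵥ gam)
          map_add' := fun z z' => by
            show ((z + z') ᵥ* N) ⬝ᵥ (liftMu μ y *ᵥ gam) =
              (z ᵥ* N) ⬝ᵥ (liftMu μ y *ᵥ gam) + (z' ᵥ* N) ⬝ᵥ (liftMu μ y *ᵥ gam)
            rw [Matrix.add_vecMul, add_dotProduct]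
          map_smul' := fun c z => by
            show ((c • z) ᵥ* N) ⬝ᵥ (liftMu μ y *ᵥ gam) =
              (RingHom.id K) c • ((z ᵥ* N) ⬝ᵥ (liftMu μ y *ᵥ gam))
            rw [RingHom.id_apply, ← Matrix.vecMulLinear_apply, LinearMap.map_smul,
              Matrix.vecMulLinear_apply, smul_dotProduct] }
      have hker : Submodule.span K (Set.range fun w => lam ᵥ* liftMu μ w)
          ≤ LinearMap.ker L := by
        rw [Submodule.span_le]
        rintro _ ⟨w, rfl⟩
        simpa [L] using key w y
      rw [hW] at hker
      have := hker (Submodule.mem_top (x := x))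
      simpa [L] using this
    have hrow : ∀ i : Fin n, (Pi.single i 1 : Fin n → K) ᵥ* N = N i := by
      intro i
      funext j
      simp [Matrix.vecMul, single_dotProduct]
    have key3 : ∀ (i : Fin n) (y : Fin n → K), N i ⬝ᵥ y = 0 := by
      intro i
      have hker : Submodule.span Kᵐᵒᵖ (Set.range fun w => liftMu μ w *ᵥ gam)
          ≤ LinearMap.ker (dotOp (N i)) := by
        rw [Submodule.span_le]
        rintro _ ⟨w, rfl⟩
        have := key2 (Pi.single i 1) w
        rw [hrow i] at this
        simpa using this
      rw [hV] at hker
      intro y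
      have := hker (Submodule.mem_top (x := y))
      simpa using this
    have hN0 : N = 0 := by
      funext i j
      have := key3 i (Pi.single j 1)
      simpa [dotProduct_single] using this
    have := sub_eq_zero.mp (hN ▸ hN0 : liftMu μ u - liftMu μ v = 0)
    exact this
  · intro hrep u v huv
    obtain ⟨lam, μ, gam, h⟩ := Nat.find_spec hS
    have hmin : ¬ ∃ d, d < Nat.find hS ∧ hasRepF S d := by
      rintro ⟨d, hdn, hrep'⟩
      exact Nat.find_min hS hdn hrep'
    have hμ := hrep (Nat.find hS) lam μ gam h hmin u v huv
    rw [h u, h v, hμ]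
end

section
/- Let K be a field, A a finite alphabet, and ≡ a monoid congruence on A* with finite fibers (every ≡-class is a finite set). Then the following are equivalent: (a) for any two ≡-compatible linear representations (λ₁, μ₁, γ₁) of dimension n and (λ₂, μ₂, γ₂) of dimension m, the shuffle representation (λ₁⊗λ₂, a ↦ μ₁(a)⊗I_m + I_n⊗μ₂(a), γ₁⊗γ₂) is ≡-compatible; (b) the shuffle coproduct respects ≡, i.e. for all words u, v ∈ A*, u ≡ v implies c(u) ≡^{⊗2} c(v). -/
open Matrix
open scoped Kronecker

/-- The shuffle coproduct `c : K⟨A⟩ → K⟨A⟩ ⊗ K⟨A⟩`, `c(a) = a⊗1 + 1⊗a`, realized in the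
monoid algebra of `A* × A*` (which is the tensor square, with basis `u ⊗ v` and product
`(u₁⊗v₁)(u₂⊗v₂) = u₁u₂ ⊗ v₁v₂`), restricted to words. -/
noncomputable def cSh (K : Type*) [Semiring K] {A : Type*} :
    FreeMonoid A →* MonoidAlgebra K (FreeMonoid A × FreeMonoid A) :=
  FreeMonoid.lift fun a =>
    MonoidAlgebra.single (FreeMonoid.of a, 1) 1 +
      MonoidAlgebra.single (1, FreeMonoid.of a) 1

/-- The natural map `K⟨A⟩ ⊗ K⟨A⟩ → K[A*/≡] ⊗ K[A*/≡]` induced by the projection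
`A* → A*/≡`; `P ≡^{⊗2} Q` means `tens2 r P = tens2 r Q`. -/
noncomputable def tens2 {K A : Type*} [Semiring K] (r : Con (FreeMonoid A))
    (P : MonoidAlgebra K (FreeMonoid A × FreeMonoid A)) :
    MonoidAlgebra K (r.Quotient × r.Quotient) :=
  MonoidAlgebra.ofCoeff (Finsupp.mapDomain (fun p => (r.mk' p.1, r.mk' p.2)) P.coeff)

/-- `≡`-compatibility of (the monoid morphism extending) a family of letter matrices. -/
def muCompat {K A : Type*} [Semiring K] (r : Con (FreeMonoid A))
    {d : Type*} [Fintype d] [DecidableEq d]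
    (μ : A → Matrix d d K) : Prop :=
  ∀ u v, r u v → FreeMonoid.lift μ u = FreeMonoid.lift μ v

section Aux
variable {K A : Type*} [Field K] {r : Con (FreeMonoid A)}
variable {d₁ d₂ : Type*} [Fintype d₁] [DecidableEq d₁] [Fintype d₂] [DecidableEq d₂]

/-- The monoid morphism `(x, y) ↦ μ₁*(x) ⊗ μ₂*(y)` on pairs of words. -/
noncomputable def pairHom (μ₁ : A → Matrix d₁ d₁ K) (μ₂ : A → Matrix d₂ d₂ K) :
    (FreeMonoid A × FreeMonoid A) →* Matrix (d₁ × d₂) (d₁ × d₂) K where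
  toFun p := (FreeMonoid.lift μ₁ p.1) ⊗ₖ (FreeMonoid.lift μ₂ p.2)
  map_one' := by simp [Matrix.one_kronecker_one]
  map_mul' p q := by simp [Matrix.mul_kronecker_mul]

/-- Its linear extension to the tensor square. -/
noncomputable def Phi (μ₁ : A → Matrix d₁ d₁ K) (μ₂ : A → Matrix d₂ d₂ K) :
    MonoidAlgebra K (FreeMonoid A × FreeMonoid A) →ₐ[K] Matrix (d₁ × d₂) (d₁ × d₂) K :=
  MonoidAlgebra.lift K _ _ (pairHom μ₁ μ₂)

/-- The shuffle representation of a word is obtained by evaluating the coproduct. -/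
lemma claimA (μ₁ : A → Matrix d₁ d₁ K) (μ₂ : A → Matrix d₂ d₂ K) (w : FreeMonoid A) :
    FreeMonoid.lift (fun a => μ₁ a ⊗ₖ (1 : Matrix d₂ d₂ K)
      + (1 : Matrix d₁ d₁ K) ⊗ₖ μ₂ a) w = Phi μ₁ μ₂ (cSh K w) := by
  have h : FreeMonoid.lift (fun a => μ₁ a ⊗ₖ (1 : Matrix d₂ d₂ K)
      + (1 : Matrix d₁ d₁ K) ⊗ₖ μ₂ a) =
      ((Phi μ₁ μ₂ : MonoidAlgebra K (FreeMonoid A × FreeMonoid A) →+* _).toMonoidHom).comp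
        (cSh K) := by
    apply FreeMonoid.hom_eq
    intro a
    simp [cSh, Phi, pairHom, MonoidAlgebra.lift_single]
  rw [h]; rfl

/-- The analogue of `pairHom` on the quotient, for compatible representations. -/
noncomputable def pairHomQ (μ₁ : A → Matrix d₁ d₁ K) (μ₂ : A → Matrix d₂ d₂ K)
    (h₁ : muCompat r μ₁) (h₂ : muCompat r μ₂) :
    (r.Quotient × r.Quotient) →* Matrix (d₁ × d₂) (d₁ × d₂) K where
  toFun q := (r.lift (FreeMonoid.lift μ₁) (fun u v h => h₁ u v h) q.1) ⊗ₖ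
      (r.lift (FreeMonoid.lift μ₂) (fun u v h => h₂ u v h) q.2)
  map_one' := by simp [Matrix.one_kronecker_one]
  map_mul' p q := by simp [Matrix.mul_kronecker_mul]

/-- For compatible representations, `Phi` factors through `tens2`. -/
lemma claimB (μ₁ : A → Matrix d₁ d₁ K) (μ₂ : A → Matrix d₂ d₂ K)
    (h₁ : muCompat r μ₁) (h₂ : muCompat r μ₂)
    (P : MonoidAlgebra K (FreeMonoid A × FreeMonoid A)) :
    Phi μ₁ μ₂ P =
      MonoidAlgebra.lift K _ _ (pairHomQ μ₁ μ₂ h₁ h₂) (tens2 r P) := by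
  rw [Phi, MonoidAlgebra.lift_apply, MonoidAlgebra.lift_apply, tens2, MonoidAlgebra.coeff_ofCoeff]
  rw [Finsupp.sum_mapDomain_index (M := K) (f := fun p : FreeMonoid A × FreeMonoid A =>
        (r.mk' p.1, r.mk' p.2)) (s := P.coeff)
      (h := fun q c => c • pairHomQ μ₁ μ₂ h₁ h₂ q)
      (fun _ => zero_smul K _) (fun _ b c => add_smul b c _)]
  apply Finsupp.sum_congr
  intro p _
  have : (pairHom μ₁ μ₂) p = (pairHomQ μ₁ μ₂ h₁ h₂) (r.mk' p.1, r.mk' p.2) := by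
    simp [pairHom, pairHomQ, Con.lift_mk']
    rfl
  rw [this]

open scoped Classical in
/-- Coefficients of `tens2` as sums over the fibers. -/
lemma tens2_apply (P : MonoidAlgebra K (FreeMonoid A × FreeMonoid A)) (x y : FreeMonoid A) :
    (tens2 r P).coeff (r.mk' x, r.mk' y) =
      P.coeff.sum (fun p c => c * (if r x p.1 then 1 else 0) * (if r y p.2 then 1 else 0)) := by
  classical
  rw [tens2, MonoidAlgebra.coeff_ofCoeff, Finsupp.mapDomain, Finsupp.sum_apply]
  apply Finsupp.sum_congr
  intro p _
  rw [Finsupp.single_apply]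
  by_cases hx : r x p.1 <;> by_cases hy : r y p.2 <;>
    simp only [hx, hy, if_true, if_false, mul_one, mul_zero, zero_mul, Prod.ext_iff,
      Con.coe_mk', Con.eq]
  · rw [if_pos ⟨r.symm hx, r.symm hy⟩]
  · rw [if_neg]; rintro ⟨-, h2⟩; exact hy (r.symm h2)
  · rw [if_neg]; rintro ⟨h1, -⟩; exact hx (r.symm h1)
  · rw [if_neg]; rintro ⟨-, h2⟩; exact hy (r.symm h2)

/-- The scalar functional `M ↦ λ M γ` of a linear representation, as a linear map. -/
noncomputable def phiL {d : Type*} [Fintype d] (lam gam : d → K) :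
    Matrix d d K →ₗ[K] K where
  toFun M := lam ⬝ᵥ M.mulVec gam
  map_add' M N := by simp [Matrix.add_mulVec, dotProduct_add]
  map_smul' c M := by simp [Matrix.smul_mulVec, dotProduct_smul]

lemma phiL_apply {d : Type*} [Fintype d] (lam gam : d → K) (M : Matrix d d K) :
    phiL lam gam M = lam ⬝ᵥ M.mulVec gam := rfl

/-- Scalar functionals factor over Kronecker products. -/
lemma phiL_kron (lam₁ gam₁ : d₁ → K) (lam₂ gam₂ : d₂ → K)
    (M₁ : Matrix d₁ d₁ K) (M₂ : Matrix d₂ d₂ K) :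
    phiL (fun p : d₁ × d₂ => lam₁ p.1 * lam₂ p.2) (fun p => gam₁ p.1 * gam₂ p.2)
        (M₁ ⊗ₖ M₂) = phiL lam₁ gam₁ M₁ * phiL lam₂ gam₂ M₂ := by
  simp only [phiL, LinearMap.coe_mk, AddHom.coe_mk, dotProduct, Matrix.mulVec, dotProduct,
    Matrix.kroneckerMap_apply, Fintype.sum_prod_type, Finset.sum_mul_sum]
  simp only [Finset.mul_sum, Finset.sum_mul]
  apply Finset.sum_congr rfl; intro i _
  apply Finset.sum_congr rfl; intro j _
  rw [Finset.sum_comm]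
  apply Finset.sum_congr rfl; intro k _
  apply Finset.sum_congr rfl; intro l _
  ring

/-- The scalar output of the shuffle representation on a word `w`, as a sum over the
coefficients of the coproduct of `w`. -/
lemma scalar_formula (μ₁ : A → Matrix d₁ d₁ K) (μ₂ : A → Matrix d₂ d₂ K)
    (lam₁ gam₁ : d₁ → K) (lam₂ gam₂ : d₂ → K) (w : FreeMonoid A) :
    phiL (fun p : d₁ × d₂ => lam₁ p.1 * lam₂ p.2) (fun p => gam₁ p.1 * gam₂ p.2)
      (FreeMonoid.lift (fun a => μ₁ a ⊗ₖ (1 : Matrix d₂ d₂ K)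
        + (1 : Matrix d₁ d₁ K) ⊗ₖ μ₂ a) w) =
    (cSh K w).coeff.sum fun p c => c * phiL lam₁ gam₁ (FreeMonoid.lift μ₁ p.1)
      * phiL lam₂ gam₂ (FreeMonoid.lift μ₂ p.2) := by
  rw [claimA, Phi, MonoidAlgebra.lift_apply, map_finsuppSum]
  apply Finsupp.sum_congr
  intro p _
  rw [LinearMap.map_smul, show (pairHom μ₁ μ₂) p =
    (FreeMonoid.lift μ₁ p.1) ⊗ₖ (FreeMonoid.lift μ₂ p.2) from rfl, phiL_kron]
  simp [smul_eq_mul, mul_assoc]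

lemma dot_reindex {ι κ : Type*} [Fintype ι] [Fintype κ] (e : ι ≃ κ)
    (lam gam : ι → K) (M : Matrix ι ι K) :
    (lam ∘ e.symm) ⬝ᵥ ((Matrix.reindex e e M).mulVec (gam ∘ e.symm)) =
      lam ⬝ᵥ M.mulVec gam := by
  simp only [Matrix.reindex_apply, dotProduct, Matrix.mulVec, dotProduct,
    Function.comp, Matrix.submatrix_apply]
  apply Fintype.sum_equiv e.symm
  intro k
  congr 1
  apply Fintype.sum_equiv e.symm
  intro l
  rfl

open scoped Classical in
/-- For any word `x`, there is a compatible linear representation whose scalar behaviour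
is the indicator of the (finite) congruence class of `x`. -/
lemma exists_rep (r : Con (FreeMonoid A)) (hfib : ∀ w : FreeMonoid A, {v | r w v}.Finite)
    (x : FreeMonoid A) :
    ∃ (n : ℕ) (μ : A → Matrix (Fin n) (Fin n) K) (lam gam : Fin n → K),
      muCompat r μ ∧
        ∀ w, lam ⬝ᵥ ((FreeMonoid.lift μ w).mulVec gam) = if r x w then 1 else 0 := by
  classical
  set C : Set (FreeMonoid A) := {w | r x w} with hCdef
  have hC : C.Finite := hfib x
  set st : FreeMonoid A → Set (FreeMonoid A) := fun w => {z | w * z ∈ C} with hst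
  have hSuf : {z : FreeMonoid A | ∃ u, u * z ∈ C}.Finite := by
    have hsub : {z : FreeMonoid A | ∃ u, u * z ∈ C} ⊆
        ⋃ w ∈ C, FreeMonoid.ofList '' {l | l ∈ w.toList.tails} := by
      rintro z ⟨u, hu⟩
      refine Set.mem_biUnion hu ⟨z.toList, ?_, rfl⟩
      rw [Set.mem_setOf_eq, List.mem_tails]
      exact ⟨u.toList, rfl⟩
    exact (Set.Finite.biUnion hC fun w _ =>
      (List.finite_toSet _).image _).subset hsub
  have hrange : (Set.range st).Finite := by
    refine hSuf.finite_subsets.subset ?_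
    rintro _ ⟨w, rfl⟩ z hz
    exact ⟨w, hz⟩
  let ι := ↥(Set.range st)
  haveI : Fintype ι := hrange.fintype
  have hwitex : ∀ t : ι, ∃ w, st w = t.1 := fun t => t.2
  let wit : ι → FreeMonoid A := fun t => (hwitex t).choose
  have hwit : ∀ t, st (wit t) = t.1 := fun t => (hwitex t).choose_spec
  let stW : FreeMonoid A → ι → ι := fun u t => ⟨st (wit t * u), ⟨wit t * u, rfl⟩⟩
  have key : ∀ (t : ι) u, (stW u t).1 = {z | u * z ∈ t.1} := by
    intro t u
    ext z
    show wit t * u * z ∈ C ↔ u * z ∈ t.1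
    rw [mul_assoc, ← hwit t]
    rfl
  have stW_one : ∀ t, stW 1 t = t := by
    intro t
    apply Subtype.ext
    rw [key]
    simp
  have stW_mul : ∀ u v t, stW (u * v) t = stW v (stW u t) := by
    intro u v t
    apply Subtype.ext
    rw [key, key, key]
    ext z
    simp [mul_assoc]
  let matOf : (ι → ι) → Matrix ι ι K := fun f i j => if f i = j then 1 else 0
  have matOf_mul : ∀ f g, matOf f * matOf g = matOf (g ∘ f) := by
    intro f g
    ext i k
    rw [Matrix.mul_apply]
    simp only [matOf, Matrix.mul_apply, Function.comp_apply, ite_mul, one_mul, zero_mul]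
    rw [Finset.sum_eq_single (f i)]
    · simp
    · intro b _ hb
      rw [if_neg (by exact fun h => hb h.symm)]
    · intro h; exact absurd (Finset.mem_univ _) h
  have matOf_one : matOf id = 1 := by
    ext i j
    simp [matOf, Matrix.one_apply]
  let Mhom : FreeMonoid A →* Matrix ι ι K :=
    { toFun := fun u => matOf (stW u)
      map_one' := by
        show matOf (stW 1) = 1
        rw [show stW 1 = id from funext stW_one]; exact matOf_one
      map_mul' := fun u v => by
        show matOf (stW (u * v)) = matOf (stW u) * matOf (stW v)
        rw [show stW (u * v) = stW v ∘ stW u from funext (stW_mul u v), ← matOf_mul] }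
  let μ : A → Matrix ι ι K := fun a => matOf (stW (FreeMonoid.of a))
  have hlift : FreeMonoid.lift μ = Mhom := by
    apply FreeMonoid.hom_eq
    intro a
    simp only [FreeMonoid.lift_eval_of]
    rfl
  let t1 : ι := ⟨st 1, ⟨1, rfl⟩⟩
  let lam : ι → K := fun t => if t = t1 then 1 else 0
  let gam : ι → K := fun t => if (1 : FreeMonoid A) ∈ t.1 then 1 else 0
  have hcompat : ∀ u v, r u v → FreeMonoid.lift μ u = FreeMonoid.lift μ v := by
    intro u v huv
    rw [hlift]
    show matOf (stW u) = matOf (stW v)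
    have : stW u = stW v := by
      funext t
      apply Subtype.ext
      rw [key, key]
      ext z
      have h1 : r (wit t * (u * z)) (wit t * (v * z)) :=
        r.mul (r.refl (wit t)) (r.mul huv (r.refl z))
      show u * z ∈ t.1 ↔ v * z ∈ t.1
      rw [← hwit t]
      show wit t * (u * z) ∈ C ↔ wit t * (v * z) ∈ C
      constructor
      · intro h; exact r.trans h h1
      · intro h; exact r.trans h (r.symm h1)
    rw [this]
  have hscal : ∀ w, lam ⬝ᵥ ((FreeMonoid.lift μ w).mulVec gam) =
      if r x w then 1 else 0 := by
    intro w
    rw [hlift]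
    show lam ⬝ᵥ (matOf (stW w)).mulVec gam = _
    have hdot : lam ⬝ᵥ (matOf (stW w)).mulVec gam = gam (stW w t1) := by
      rw [dotProduct, Finset.sum_eq_single t1]
      · rw [show lam t1 = 1 from if_pos rfl, one_mul, Matrix.mulVec, dotProduct,
          Finset.sum_eq_single (stW w t1)]
        · rw [show matOf (stW w) t1 (stW w t1) = 1 from if_pos rfl, one_mul]
        · intro b _ hb
          rw [show matOf (stW w) t1 b = 0 from if_neg (fun h => hb h.symm), zero_mul]
        · intro h; exact absurd (Finset.mem_univ _) h
      · intro b _ hb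
        rw [show lam b = 0 from if_neg hb, zero_mul]
      · intro h; exact absurd (Finset.mem_univ _) h
    rw [hdot]
    show (if (1 : FreeMonoid A) ∈ (stW w t1).1 then (1:K) else 0) = _
    have hmem : ((1 : FreeMonoid A) ∈ (stW w t1).1) ↔ r x w := by
      rw [key]
      show w * 1 ∈ t1.1 ↔ r x w
      show 1 * (w * 1) ∈ C ↔ r x w
      rw [one_mul, mul_one]
      rfl
    by_cases h : r x w
    · rw [if_pos (hmem.2 h), if_pos h]
    · rw [if_neg (fun hh => h (hmem.1 hh)), if_neg h]
  -- transport to `Fin n`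
  let n := Fintype.card ι
  let e : ι ≃ Fin n := Fintype.equivFin ι
  let ρ := Matrix.reindexAlgEquiv K K e
  let μ' : A → Matrix (Fin n) (Fin n) K := fun a => ρ (μ a)
  have hlift' : ∀ u, FreeMonoid.lift μ' u = ρ (FreeMonoid.lift μ u) := by
    have h : FreeMonoid.lift μ' =
        (ρ.toRingEquiv.toMonoidHom).comp (FreeMonoid.lift μ) := by
      apply FreeMonoid.hom_eq
      intro a
      simp only [FreeMonoid.lift_eval_of, MonoidHom.comp_apply]
      rfl
    intro u; rw [h]; rfl
  refine ⟨n, μ', lam ∘ e.symm, gam ∘ e.symm, ?_, ?_⟩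
  · intro u v huv
    rw [hlift' u, hlift' v, hcompat u v huv]
  · intro w
    rw [hlift' w]
    show (lam ∘ e.symm) ⬝ᵥ ((Matrix.reindex e e (FreeMonoid.lift μ w)).mulVec (gam ∘ e.symm)) = _
    rw [dot_reindex, hscal]

end Aux

/-- Let `K` be a field and `≡` a congruence on `A*` with finite fibers.
The following are equivalent: (a) for any two `≡`-compatible linear representations, the
shuffle representation `(λ₁⊗λ₂, a ↦ μ₁(a)⊗I + I⊗μ₂(a), γ₁⊗γ₂)` is `≡`-compatible;
(b) `u ≡ v` implies `c(u) ≡^{⊗2} c(v)` for the shuffle coproduct `c`. -/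
theorem stmt_14 {K A : Type*} [Field K] [Fintype A] (r : Con (FreeMonoid A))
    (hfib : ∀ w : FreeMonoid A, {v | r w v}.Finite) :
    (∀ (n m : ℕ) (lam₁ : Fin n → K) (μ₁ : A → Matrix (Fin n) (Fin n) K)
        (gam₁ : Fin n → K) (lam₂ : Fin m → K) (μ₂ : A → Matrix (Fin m) (Fin m) K)
        (gam₂ : Fin m → K),
        muCompat r μ₁ → muCompat r μ₂ →
        muCompat r (fun a => μ₁ a ⊗ₖ (1 : Matrix (Fin m) (Fin m) K)
          + (1 : Matrix (Fin n) (Fin n) K) ⊗ₖ μ₂ a)) ↔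
      (∀ u v : FreeMonoid A, r u v → tens2 r (cSh K u) = tens2 r (cSh K v)) := by
  constructor
  · -- (a) → (b)
    intro hrep u v huv
    apply MonoidAlgebra.ext
    apply Finsupp.ext
    rintro ⟨p, q⟩
    obtain ⟨x, rfl⟩ := r.mk'_surjective p
    obtain ⟨y, rfl⟩ := r.mk'_surjective q
    obtain ⟨n, μ₁, lam₁, gam₁, h₁, hs₁⟩ := exists_rep (K := K) r hfib x
    obtain ⟨m, μ₂, lam₂, gam₂, h₂, hs₂⟩ := exists_rep (K := K) r hfib y
    have hmat := hrep n m lam₁ μ₁ gam₁ lam₂ μ₂ gam₂ h₁ h₂ u v huv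
    have hval : ∀ w, (tens2 r (cSh K w)).coeff (r.mk' x, r.mk' y) =
        phiL (fun p : Fin n × Fin m => lam₁ p.1 * lam₂ p.2)
          (fun p => gam₁ p.1 * gam₂ p.2)
          (FreeMonoid.lift (fun a => μ₁ a ⊗ₖ (1 : Matrix (Fin m) (Fin m) K)
            + (1 : Matrix (Fin n) (Fin n) K) ⊗ₖ μ₂ a) w) := by
      intro w
      rw [tens2_apply, scalar_formula]
      apply Finsupp.sum_congr
      intro p _
      rw [phiL_apply, phiL_apply, hs₁ p.1, hs₂ p.2]
    rw [hval u, hval v, hmat]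
  · -- (b) → (a)
    intro hcop n m lam₁ μ₁ gam₁ lam₂ μ₂ gam₂ h₁ h₂ u v huv
    rw [claimA, claimA, claimB μ₁ μ₂ h₁ h₂, claimB μ₁ μ₂ h₁ h₂, hcop u v huv]
end

section
/- Let K be a semiring, A a finite alphabet, R ⊆ A* × A* a set of relators, and ≡_R the monoid congruence on A* generated by R. Then ≡_R is K-⧢ compatible if and only if for every pair (w₁, w₂) ∈ R one has c(w₁) ≡_R^{⊗2} c(w₂). -/
/-- A congruence `≡` on `A*` is `K`-⧢ compatible if `u ≡ v` implies
`c(u) ≡^{⊗2} c(v)` for the shuffle coproduct `c`. -/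
def KShCompat (K : Type*) [Semiring K] {A : Type*} (r : Con (FreeMonoid A)) : Prop :=
  ∀ u v : FreeMonoid A, r u v → tens2 r (cSh K u) = tens2 r (cSh K v)

/-- Relator of type (LE): `a ≡ 1` with `a` a letter (letter erasure). -/
def IsLE {A : Type*} (u v : FreeMonoid A) : Prop :=
  ∃ a : A, u = FreeMonoid.of a ∧ v = 1

/-- Relator of type (LI): `a ≡ b` with `a`, `b` letters (letter identification). -/
def IsLI {A : Type*} (u v : FreeMonoid A) : Prop :=
  ∃ a b : A, u = FreeMonoid.of a ∧ v = FreeMonoid.of b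

/-- Relator of type (LC): `ab ≡ ba` with `a`, `b` letters (partial commutation). -/
def IsLC {A : Type*} (u v : FreeMonoid A) : Prop :=
  ∃ a b : A, u = FreeMonoid.of a * FreeMonoid.of b ∧ v = FreeMonoid.of b * FreeMonoid.of a


lemma tens2_mul {K A : Type*} [Semiring K] (r : Con (FreeMonoid A))
    (P Q : MonoidAlgebra K (FreeMonoid A × FreeMonoid A)) :
    tens2 r (P * Q) = tens2 r P * tens2 r Q := by
  have : tens2 (K := K) r =
      MonoidAlgebra.mapDomainRingHom K ((r.mk').prodMap (r.mk')) := rfl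
  rw [this, map_mul]

/-- For any semiring `K` and relator set `R`, the congruence `≡_R`
generated by `R` is `K`-⧢ compatible iff `c(w₁) ≡_R^{⊗2} c(w₂)` for each `(w₁, w₂) ∈ R`. -/
theorem stmt_15 {K A : Type*} [Semiring K] [Fintype A]
    (rel : FreeMonoid A → FreeMonoid A → Prop) :
    KShCompat K (conGen rel) ↔
      ∀ u v : FreeMonoid A, rel u v →
        tens2 (conGen rel) (cSh K u) = tens2 (conGen rel) (cSh K v) := by
  constructor
  · intro h u v huv
    exact h u v (ConGen.Rel.of u v huv)
  · intro h u v huv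
    induction huv with
    | of u v h' => exact h u v h'
    | refl => rfl
    | symm _ ih => exact ih.symm
    | trans _ _ ih1 ih2 => exact ih1.trans ih2
    | mul _ _ ih1 ih2 =>
        rw [map_mul, map_mul, tens2_mul, tens2_mul, ih1, ih2]
end

section
/- Let B be the Boolean semiring, i.e. a semiring with exactly two elements 0 ≠ 1 satisfying 1 + 1 = 1, and let A be a finite alphabet. A monoid congruence ≡ on A* is B-⧢ compatible if and only if it is generated by a set of relators each of one of the following three types: (LE) a ≡ 1 with a ∈ A a letter; (LI) a ≡ b with a, b ∈ A letters; (LC) ab ≡ ba with a, b ∈ A letters. -/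
open List
namespace Stmt17

open List



variable {A : Type*}

/-- The set of "splittings" (pairs of complementary scattered subwords) of a list. -/
def S : List A → Set (List A × List A)
  | [] => {([], [])}
  | a :: l => (fun pq : List A × List A => (a :: pq.1, pq.2)) '' S l ∪
      (fun pq : List A × List A => (pq.1, a :: pq.2)) '' S l

lemma S_nil : S ([] : List A) = {([], [])} := rfl

lemma S_cons (a : A) (l : List A) :
    S (a :: l) = (fun pq : List A × List A => (a :: pq.1, pq.2)) '' S l ∪
      (fun pq : List A × List A => (pq.1, a :: pq.2)) '' S l := rfl

lemma mem_S_cons {a : A} {l : List A} {p q : List A} :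
    (p, q) ∈ S (a :: l) ↔
      (∃ p', p = a :: p' ∧ (p', q) ∈ S l) ∨ (∃ q', q = a :: q' ∧ (p, q') ∈ S l) := by
  rw [S_cons]
  constructor
  · rintro (⟨⟨p', q'⟩, hm, heq⟩ | ⟨⟨p', q'⟩, hm, heq⟩) <;> cases heq
    · exact Or.inl ⟨p', rfl, hm⟩
    · exact Or.inr ⟨q', rfl, hm⟩
  · rintro (⟨p', rfl, hm⟩ | ⟨q', rfl, hm⟩)
    · exact Or.inl ⟨(p', q), hm, rfl⟩
    · exact Or.inr ⟨(p, q'), hm, rfl⟩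

lemma left_full_mem (l : List A) : (l, []) ∈ S l := by
  induction l with
  | nil => exact rfl
  | cons a l ih => exact mem_S_cons.2 (Or.inl ⟨l, rfl, ih⟩)

lemma right_full_mem (l : List A) : (([] : List A), l) ∈ S l := by
  induction l with
  | nil => exact rfl
  | cons a l ih => exact mem_S_cons.2 (Or.inr ⟨l, rfl, ih⟩)

lemma eq_of_right_nil {l p : List A} (h : (p, ([] : List A)) ∈ S l) : p = l := by
  induction l generalizing p with
  | nil => simpa [S_nil] using h
  | cons a l ih =>
    rcases mem_S_cons.1 h with ⟨p', rfl, hm⟩ | ⟨q', hq, _⟩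
    · rw [ih hm]
    · exact absurd hq (by simp)

lemma eq_of_left_nil {l q : List A} (h : (([] : List A), q) ∈ S l) : q = l := by
  induction l generalizing q with
  | nil => simpa [S_nil] using h
  | cons a l ih =>
    rcases mem_S_cons.1 h with ⟨p', hp, _⟩ | ⟨q', rfl, hm⟩
    · exact absurd hp (by simp)
    · rw [ih hm]

lemma S_append {l₁ l₂ p₁ q₁ p₂ q₂ : List A} (h₁ : (p₁, q₁) ∈ S l₁) (h₂ : (p₂, q₂) ∈ S l₂) :
    (p₁ ++ p₂, q₁ ++ q₂) ∈ S (l₁ ++ l₂) := by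
  induction l₁ generalizing p₁ q₁ with
  | nil =>
    have : p₁ = [] ∧ q₁ = [] := by simpa [S_nil, Prod.ext_iff] using h₁
    simpa [this.1, this.2] using h₂
  | cons a l ih =>
    rcases mem_S_cons.1 h₁ with ⟨p', rfl, hm⟩ | ⟨q', rfl, hm⟩
    · exact mem_S_cons.2 (Or.inl ⟨p' ++ p₂, rfl, ih hm⟩)
    · exact mem_S_cons.2 (Or.inr ⟨q' ++ q₂, rfl, ih hm⟩)

lemma mem_of_mem_left {l p q : List A} (h : (p, q) ∈ S l) {a : A} (ha : a ∈ p) : a ∈ l := by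
  induction l generalizing p q with
  | nil =>
    obtain ⟨rfl, rfl⟩ : p = [] ∧ q = [] := by simpa [S_nil, Prod.ext_iff] using h
    simp at ha
  | cons b l ih =>
    rcases mem_S_cons.1 h with ⟨p', rfl, hm⟩ | ⟨q', rfl, hm⟩
    · rcases mem_cons.1 ha with rfl | ha'
      · exact mem_cons_self
      · exact mem_cons_of_mem _ (ih hm ha')
    · exact mem_cons_of_mem _ (ih hm ha)

lemma mem_of_mem_right {l p q : List A} (h : (p, q) ∈ S l) {a : A} (ha : a ∈ q) : a ∈ l := by
  induction l generalizing p q with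
  | nil =>
    obtain ⟨rfl, rfl⟩ : p = [] ∧ q = [] := by simpa [S_nil, Prod.ext_iff] using h
    simp at ha
  | cons b l ih =>
    rcases mem_S_cons.1 h with ⟨p', rfl, hm⟩ | ⟨q', rfl, hm⟩
    · exact mem_cons_of_mem _ (ih hm ha)
    · rcases mem_cons.1 ha with rfl | ha'
      · exact mem_cons_self
      · exact mem_cons_of_mem _ (ih hm ha')

lemma countP_S {l p q : List A} (P : A → Bool) (h : (p, q) ∈ S l) :
    p.countP P + q.countP P = l.countP P := by
  induction l generalizing p q with
  | nil =>
    have : p = [] ∧ q = [] := by simpa [S_nil, Prod.ext_iff] using h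
    simp [this.1, this.2]
  | cons a l ih =>
    rcases mem_S_cons.1 h with ⟨p', rfl, hm⟩ | ⟨q', rfl, hm⟩
    · rw [countP_cons, countP_cons, ← ih hm]; ring
    · rw [countP_cons, countP_cons, ← ih hm]; ring

lemma length_S {l p q : List A} (h : (p, q) ∈ S l) : p.length + q.length = l.length := by
  have := countP_S (fun _ => true) h
  simpa [countP_true] using this

lemma filter_mem_S (P : A → Bool) (l : List A) : (l.filter P, l.filter (fun a => ¬ P a)) ∈ S l := by
  induction l with
  | nil => exact rfl
  | cons a l ih =>
    by_cases h : P a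
    · rw [filter_cons_of_pos h, filter_cons_of_neg (by simp [h])]
      exact mem_S_cons.2 (Or.inl ⟨_, rfl, ih⟩)
    · rw [filter_cons_of_neg (by simpa using h), filter_cons_of_pos (by simpa using h)]
      exact mem_S_cons.2 (Or.inr ⟨_, rfl, ih⟩)

lemma all_full_eq_filter {l p q : List A} (P : A → Bool) (h : (p, q) ∈ S l)
    (hall : ∀ a ∈ p, P a) (hlen : p.length = (l.filter P).length) : p = l.filter P := by
  induction l generalizing p q with
  | nil =>
    have : p = [] ∧ q = [] := by simpa [S_nil, Prod.ext_iff] using h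
    simp [this.1]
  | cons a l ih =>
    rcases mem_S_cons.1 h with ⟨p', rfl, hm⟩ | ⟨q', rfl, hm⟩
    · have hPa : P a := hall a (mem_cons_self)
      rw [filter_cons_of_pos hPa] at hlen ⊢
      rw [ih hm (fun x hx => hall x (mem_cons_of_mem _ hx)) (by simpa using hlen)]
    · by_cases hPa : P a
      · exfalso
        have hle : p.countP P ≤ l.countP P := by
          have := countP_S P hm; omega
        have hcp : p.countP P = p.length := by
          rw [countP_eq_length]; exact fun x hx => hall x hx
        rw [filter_cons_of_pos hPa] at hlen
        have h2 : (filter P l).length = countP P l := (countP_eq_length_filter (p := P) (l := l)).symm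
        simp only [length_cons, h2] at hlen
        omega
      · rw [filter_cons_of_neg (by simpa using hPa)] at hlen ⊢
        exact ih hm hall hlen

lemma S_map {l p q : List A} {B : Type*} (f : A → B) (h : (p, q) ∈ S l) :
    (p.map f, q.map f) ∈ S (l.map f) := by
  induction l generalizing p q with
  | nil =>
    have : p = [] ∧ q = [] := by simpa [S_nil, Prod.ext_iff] using h
    simp [this.1, this.2, S_nil]
  | cons a l ih =>
    rcases mem_S_cons.1 h with ⟨p', rfl, hm⟩ | ⟨q', rfl, hm⟩
    · exact mem_S_cons.2 (Or.inl ⟨_, rfl, ih hm⟩)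
    · exact mem_S_cons.2 (Or.inr ⟨_, rfl, ih hm⟩)

lemma S_map_surj {l : List A} {B : Type*} {f : A → B} {P Q : List B}
    (h : (P, Q) ∈ S (l.map f)) : ∃ p q, (p, q) ∈ S l ∧ P = p.map f ∧ Q = q.map f := by
  induction l generalizing P Q with
  | nil =>
    have : P = [] ∧ Q = [] := by simpa [S_nil, Prod.ext_iff] using h
    exact ⟨[], [], rfl, by simp [this.1, this.2]⟩
  | cons a l ih =>
    rw [map_cons] at h
    rcases mem_S_cons.1 h with ⟨P', rfl, hm⟩ | ⟨Q', rfl, hm⟩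
    · obtain ⟨p, q, hs, rfl, rfl⟩ := ih hm
      exact ⟨a :: p, q, mem_S_cons.2 (Or.inl ⟨p, rfl, hs⟩), by simp, rfl⟩
    · obtain ⟨p, q, hs, rfl, rfl⟩ := ih hm
      exact ⟨p, a :: q, mem_S_cons.2 (Or.inr ⟨q, rfl, hs⟩), rfl, by simp⟩

/-- Rigidity: in `γ^k δ T`, a splitting whose second component is `γ^i` and whose first
component starts with `δ` must have `k ≤ i`, with the first component `δ :: T` if `i = k`. -/
lemma replicate_rigidity {γ δ : A} (hne : γ ≠ δ) {T p : List A} :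
    ∀ {k i : ℕ}, (p, replicate i γ) ∈ S (replicate k γ ++ δ :: T) → p.head? = some δ →
      k ≤ i ∧ (i = k → p = δ :: T) := by
  intro k
  induction k generalizing p with
  | zero =>
    intro i h _
    refine ⟨Nat.zero_le _, fun hi => ?_⟩
    subst hi
    simpa using eq_of_right_nil (by simpa using h)
  | succ k ih =>
    intro i h hhead
    rw [replicate_succ, cons_append] at h
    rcases mem_S_cons.1 h with ⟨p', rfl, _⟩ | ⟨q', hq, hm⟩
    · exfalso; simp at hhead; first | exact hne hhead | exact hne hhead.symm
    · rcases i with _ | i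
      · exact absurd hq (by simp)
      · rw [replicate_succ] at hq
        injection hq with h1 h2
        subst h2
        obtain ⟨h1, h2⟩ := ih hm hhead
        exact ⟨by omega, fun he => h2 (by omega)⟩

/-- Any splitting of a replicate is a pair of replicates. -/
lemma S_replicate {γ : A} {n : ℕ} {p q : List A} (h : (p, q) ∈ S (replicate n γ)) :
    p = replicate p.length γ ∧ q = replicate q.length γ := by
  constructor
  · exact eq_replicate_of_mem (fun b hb => (mem_replicate.1 (mem_of_mem_left h hb)).2)
  · exact eq_replicate_of_mem (fun b hb => (mem_replicate.1 (mem_of_mem_right h hb)).2)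


section Comb
variable {B : Type*} [DecidableEq B]

lemma length_eq_count_add_count {γ δ : B} {l : List B} (hl : ∀ c ∈ l, c = γ ∨ c = δ)
    (hγδ : γ ≠ δ) : l.length = l.count γ + l.count δ := by
  induction l with
  | nil => simp
  | cons a t ih =>
    have ht : ∀ c ∈ t, c = γ ∨ c = δ := fun c hc => hl c (mem_cons_of_mem _ hc)
    rcases hl a (mem_cons_self) with rfl | rfl <;>
      simp [count_cons, ih ht, hγδ, Ne.symm hγδ] <;> omega

lemma firstrun {γ δ : B} {l : List B} (hl : ∀ c ∈ l, c = γ ∨ c = δ) (hδ : δ ∈ l)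
    (hγδ : γ ≠ δ) : ∃ k T, l = replicate k γ ++ δ :: T := by
  induction l with
  | nil => simp at hδ
  | cons a t ih =>
    rcases hl a (mem_cons_self) with rfl | rfl
    · have hδt : δ ∈ t := by
        rcases mem_cons.1 hδ with h | h
        · exact absurd h.symm hγδ
        · exact h
      obtain ⟨k, T, rfl⟩ := ih (fun c hc => hl c (mem_cons_of_mem _ hc)) hδt
      exact ⟨k + 1, T, by rw [replicate_succ]; rfl⟩
    · exact ⟨0, t, rfl⟩

lemma samehead {γ δ : B} (hγδ : γ ≠ δ) {k k' : ℕ} {T T' : List B} (hk : 1 ≤ k) (hk' : 1 ≤ k')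
    (hm : ∀ p q : List B, (p, q) ∈ S (replicate k γ ++ δ :: T) → p ≠ [] → q ≠ [] →
      (p, q) ∈ S (replicate k' γ ++ δ :: T'))
    (hm' : ∀ p q : List B, (p, q) ∈ S (replicate k' γ ++ δ :: T') → p ≠ [] → q ≠ [] →
      (p, q) ∈ S (replicate k γ ++ δ :: T)) :
    k = k' ∧ T = T' := by
  have h1 : (δ :: T, replicate k γ) ∈ S (replicate k γ ++ δ :: T) := by
    have := S_append (right_full_mem (replicate k γ)) (left_full_mem (δ :: T))
    simpa using this
  have h2 : (δ :: T', replicate k' γ) ∈ S (replicate k' γ ++ δ :: T') := by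
    have := S_append (right_full_mem (replicate k' γ)) (left_full_mem (δ :: T'))
    simpa using this
  have r1 := replicate_rigidity hγδ
    (hm _ _ h1 (by simp) (by simp [replicate_eq_nil_iff]; omega)) (by simp)
  have r2 := replicate_rigidity hγδ
    (hm' _ _ h2 (by simp) (by simp [replicate_eq_nil_iff]; omega)) (by simp)
  have hkk : k = k' := by omega
  exact ⟨hkk, by simpa using r1.2 hkk⟩

lemma mixed {γ δ : B} (hγδ : γ ≠ δ) {X Y : List B}
    (hU : ∀ c ∈ γ :: X, c = γ ∨ c = δ) (hV : ∀ c ∈ δ :: Y, c = γ ∨ c = δ)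
    (hcγ : (γ :: X).count γ = (δ :: Y).count γ) (hcδ : (γ :: X).count δ = (δ :: Y).count δ)
    (hm : ∀ p q : List B, (p, q) ∈ S (γ :: X) → p ≠ [] → q ≠ [] → (p, q) ∈ S (δ :: Y))
    (hm' : ∀ p q : List B, (p, q) ∈ S (δ :: Y) → p ≠ [] → q ≠ [] → (p, q) ∈ S (γ :: X)) :
    γ :: X = [γ, δ] ∧ δ :: Y = [δ, γ] := by
  -- X and Y are nonempty
  have hδU : δ ∈ γ :: X := by
    rw [← count_pos_iff, hcδ]; simp [count_cons_self]
  have hγV : γ ∈ δ :: Y := by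
    rw [← count_pos_iff, ← hcγ]; simp [count_cons_self]
  have hXne : X ≠ [] := by
    rintro rfl; rcases mem_cons.1 hδU with h | h
    · exact hγδ h.symm
    · simp at h
  have hYne : Y ≠ [] := by
    rintro rfl; rcases mem_cons.1 hγV with h | h
    · exact hγδ h
    · simp at h
  -- Step 1: X = δ :: X₂, Y = γ :: Y₂
  obtain ⟨X₂, hX⟩ : ∃ X₂, X = δ :: X₂ := by
    have h0 : (([γ] : List B), X) ∈ S (γ :: X) := mem_S_cons.2 (Or.inl ⟨[], rfl, right_full_mem X⟩)
    have h1 := hm _ _ h0 (by simp) hXne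
    rcases mem_S_cons.1 h1 with ⟨p', hp, _⟩ | ⟨q', hq, _⟩
    · exact absurd hp (by simp [hγδ])
    · exact ⟨q', hq⟩
  obtain ⟨Y₂, hY⟩ : ∃ Y₂, Y = γ :: Y₂ := by
    have h0 : (([δ] : List B), Y) ∈ S (δ :: Y) := mem_S_cons.2 (Or.inl ⟨[], rfl, right_full_mem Y⟩)
    have h1 := hm' _ _ h0 (by simp) hYne
    rcases mem_S_cons.1 h1 with ⟨p', hp, _⟩ | ⟨q', hq, _⟩
    · exact absurd hp (by simp [Ne.symm hγδ])
    · exact ⟨q', hq⟩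
  subst hX; subst hY
  -- key: any splitting of γ :: Y₂ with second component [γ] has first component X₂
  have key : ∀ p₂ : List B, (p₂, [γ]) ∈ S (γ :: Y₂) → p₂ = X₂ := by
    intro p₂ h
    have h1 : (δ :: p₂, [γ]) ∈ S (δ :: γ :: Y₂) := mem_S_cons.2 (Or.inl ⟨p₂, rfl, h⟩)
    have h2 := hm' _ _ h1 (by simp) (by simp)
    have h3 : (δ :: p₂, replicate 1 γ) ∈ S (replicate 1 γ ++ δ :: X₂) := by simpa using h2
    simpa using (replicate_rigidity hγδ h3 (by simp)).2 rfl
  have hY₂X₂ : Y₂ = X₂ := key Y₂ (mem_S_cons.2 (Or.inr ⟨[], rfl, left_full_mem Y₂⟩))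
  -- case analysis on γ ∈ Y₂
  by_cases hγY₂ : γ ∈ Y₂
  · exfalso
    by_cases hδY₂ : δ ∈ Y₂
    · -- build a splitting of V with component ([δ...], [δ]) and head δ : contradiction in U
      obtain ⟨Z₁, Z₂, hZ⟩ := append_of_mem hδY₂
      have hsub : ((Z₁ ++ Z₂ : List B), [δ]) ∈ S Y₂ := by
        rw [hZ]
        exact S_append (left_full_mem Z₁) (mem_S_cons.2 (Or.inr ⟨[], rfl, left_full_mem Z₂⟩))
      have h1 : ((δ :: γ :: (Z₁ ++ Z₂) : List B), [δ]) ∈ S (δ :: γ :: Y₂) :=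
        mem_S_cons.2 (Or.inl ⟨_, rfl, mem_S_cons.2 (Or.inl ⟨_, rfl, hsub⟩)⟩)
      have h2 := hm' _ _ h1 (by simp) (by simp)
      rcases mem_S_cons.1 h2 with ⟨p', hp, _⟩ | ⟨q', hq, _⟩
      · exact absurd hp (by simp [Ne.symm hγδ])
      · exact absurd hq (by simp [Ne.symm hγδ])
    · -- Y₂ = replicate m γ with m ≥ 1
      have hY₂rep : Y₂ = replicate Y₂.length γ := by
        refine eq_replicate_of_mem (fun b hb => ?_)
        rcases hV b (by simp [hb]) with rfl | rfl
        · rfl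
        · exact absurd hb hδY₂
      have hmpos : 1 ≤ Y₂.length := length_pos_iff.2 (ne_nil_of_mem hγY₂)
      have h1 : (([γ, δ] : List B), Y₂) ∈ S (γ :: δ :: X₂) := by
        rw [← hY₂X₂]
        exact mem_S_cons.2 (Or.inl ⟨_, rfl, mem_S_cons.2 (Or.inl ⟨_, rfl, right_full_mem Y₂⟩)⟩)
      have h2 := hm _ _ h1 (by simp) (ne_nil_of_mem hγY₂)
      rcases mem_S_cons.1 h2 with ⟨p', hp, _⟩ | ⟨q', hq, _⟩
      · exact absurd hp (by simp [hγδ])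
      · rw [hY₂rep] at hq
        obtain ⟨m, hm0⟩ : ∃ m, Y₂.length = m + 1 := ⟨Y₂.length - 1, by omega⟩
        rw [hm0, replicate_succ] at hq
        exact absurd hq (by simp [hγδ])
  · -- Y₂ = replicate m δ
    have hY₂rep : Y₂ = replicate Y₂.length δ := by
      refine eq_replicate_of_mem (fun b hb => ?_)
      rcases hV b (by simp [hb]) with rfl | rfl
      · exact absurd hb hγY₂
      · rfl
    rcases hm0 : Y₂.length with _ | m
    · -- m = 0 : the exceptional case
      obtain rfl : Y₂ = [] := length_eq_zero_iff.1 hm0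
      obtain rfl : X₂ = [] := hY₂X₂.symm
      exact ⟨rfl, rfl⟩
    · exfalso
      have h1 : ((δ :: γ :: replicate m δ : List B), [δ]) ∈ S (δ :: γ :: Y₂) := by
        refine mem_S_cons.2 (Or.inl ⟨_, rfl, mem_S_cons.2 (Or.inl ⟨_, rfl, ?_⟩)⟩)
        rw [hY₂rep, hm0, replicate_succ]
        exact mem_S_cons.2 (Or.inr ⟨[], rfl, left_full_mem _⟩)
      have h2 := hm' _ _ h1 (by simp) (by simp)
      rcases mem_S_cons.1 h2 with ⟨p', hp, _⟩ | ⟨q', hq, _⟩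
      · exact absurd hp (by simp [Ne.symm hγδ])
      · exact absurd hq (by simp [Ne.symm hγδ])

/-- The central combinatorial lemma: two words over a two-letter alphabet with the same
letter counts and the same proper splittings are equal, except for the swap pair. -/
lemma comb {γ δ : B} (hγδ : γ ≠ δ) {U V : List B}
    (hU : ∀ c ∈ U, c = γ ∨ c = δ) (hV : ∀ c ∈ V, c = γ ∨ c = δ)
    (hcγ : U.count γ = V.count γ) (hcδ : U.count δ = V.count δ)
    (hm : ∀ p q : List B, (p, q) ∈ S U → p ≠ [] → q ≠ [] → (p, q) ∈ S V)
    (hm' : ∀ p q : List B, (p, q) ∈ S V → p ≠ [] → q ≠ [] → (p, q) ∈ S U) :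
    U = V ∨ (U = [γ, δ] ∧ V = [δ, γ]) ∨ (U = [δ, γ] ∧ V = [γ, δ]) := by
  by_cases hδ0 : U.count δ = 0
  · left
    have hUrep : U = replicate (U.count γ) γ := by
      have : ∀ c ∈ U, c = γ := by
        intro c hc
        rcases hU c hc with rfl | rfl
        · rfl
        · exact absurd hc (count_eq_zero.1 hδ0)
      conv_lhs => rw [eq_replicate_of_mem this]
      rw [count_eq_length.2 (fun b hb => (this b hb).symm)]
    have hVrep : V = replicate (V.count γ) γ := by
      have : ∀ c ∈ V, c = γ := by
        intro c hc
        rcases hV c hc with rfl | rfl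
        · rfl
        · exact absurd hc (count_eq_zero.1 (hcδ ▸ hδ0))
      conv_lhs => rw [eq_replicate_of_mem this]
      rw [count_eq_length.2 (fun b hb => (this b hb).symm)]
    rw [hUrep, hVrep, hcγ]
  by_cases hγ0 : U.count γ = 0
  · left
    have hUrep : U = replicate (U.count δ) δ := by
      have : ∀ c ∈ U, c = δ := by
        intro c hc
        rcases hU c hc with rfl | rfl
        · exact absurd hc (count_eq_zero.1 hγ0)
        · rfl
      conv_lhs => rw [eq_replicate_of_mem this]
      rw [count_eq_length.2 (fun b hb => (this b hb).symm)]
    have hVrep : V = replicate (V.count δ) δ := by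
      have : ∀ c ∈ V, c = δ := by
        intro c hc
        rcases hV c hc with rfl | rfl
        · exact absurd hc (count_eq_zero.1 (hcγ ▸ hγ0))
        · rfl
      conv_lhs => rw [eq_replicate_of_mem this]
      rw [count_eq_length.2 (fun b hb => (this b hb).symm)]
    rw [hUrep, hVrep, hcδ]
  -- both letters occur in U (hence in V)
  have hδU : δ ∈ U := count_pos_iff.1 (by omega)
  have hγU : γ ∈ U := count_pos_iff.1 (by omega)
  have hδV : δ ∈ V := count_pos_iff.1 (by rw [← hcδ]; omega)
  have hγV : γ ∈ V := count_pos_iff.1 (by rw [← hcγ]; omega)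
  obtain ⟨u0, U', rfl⟩ := exists_cons_of_ne_nil (ne_nil_of_mem hδU)
  obtain ⟨v0, V', rfl⟩ := exists_cons_of_ne_nil (ne_nil_of_mem hδV)
  rcases hU u0 (mem_cons_self) with rfl | rfl <;>
    rcases hV v0 (mem_cons_self) with h | h
  · -- both start with γ = u0; (watch out: h : v0 = γ or δ with v0 already named)
    subst h
    left
    obtain ⟨k, T, hT⟩ := firstrun hU hδU hγδ
    obtain ⟨k', T', hT'⟩ := firstrun hV hδV hγδ
    have hk : 1 ≤ k := by
      rcases k with _ | k
      · exfalso; simp at hT; first | exact hγδ hT.1 | exact hγδ hT.1.symm | exact (Ne.symm hγδ) hT.1 | exact (Ne.symm hγδ) hT.1.symm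
      · omega
    have hk' : 1 ≤ k' := by
      rcases k' with _ | k'
      · exfalso; simp at hT'; first | exact hγδ hT'.1 | exact hγδ hT'.1.symm | exact (Ne.symm hγδ) hT'.1 | exact (Ne.symm hγδ) hT'.1.symm
      · omega
    rw [hT, hT'] at hm hm' ⊢
    obtain ⟨h1, h2⟩ := samehead hγδ hk hk' hm hm'
    rw [h1, h2]
  · -- U starts γ, V starts δ : mixed
    subst h
    right; left
    exact mixed hγδ hU hV hcγ hcδ hm hm'
  · -- U starts δ, V starts γ : mixed with swapped roles
    subst h
    right; right
    have := mixed hγδ.symm (fun c hc => (hU c hc).symm) (fun c hc => (hV c hc).symm)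
      hcδ hcγ hm hm'
    exact ⟨this.1, this.2⟩
  · -- both start with δ
    subst h
    left
    obtain ⟨k, T, hT⟩ := firstrun (fun c hc => (hU c hc).symm) hγU hγδ.symm
    obtain ⟨k', T', hT'⟩ := firstrun (fun c hc => (hV c hc).symm) hγV hγδ.symm
    have hk : 1 ≤ k := by
      rcases k with _ | k
      · exfalso; simp at hT; first | exact hγδ hT.1 | exact hγδ hT.1.symm | exact (Ne.symm hγδ) hT.1 | exact (Ne.symm hγδ) hT.1.symm
      · omega
    have hk' : 1 ≤ k' := by
      rcases k' with _ | k'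
      · exfalso; simp at hT'; first | exact hγδ hT'.1 | exact hγδ hT'.1.symm | exact (Ne.symm hγδ) hT'.1 | exact (Ne.symm hγδ) hT'.1.symm
      · omega
    rw [hT, hT'] at hm hm' ⊢
    obtain ⟨h1, h2⟩ := samehead hγδ.symm hk hk' hm hm'
    rw [h1, h2]

end Comb

section Algebra
variable {K : Type*} [Semiring K] {A : Type*}

lemma bool_add_zero (htwo : (1 : K) + 1 = 1) (hcard : ∀ x : K, x = 0 ∨ x = 1)
    (hne : (0 : K) ≠ 1) {x y : K} (h : x + y = 0) : x = 0 ∧ y = 0 := by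
  rcases hcard x with rfl | rfl <;> rcases hcard y with rfl | rfl <;>
    simp_all <;> exact hne (by rw [← h]; simp [htwo])

lemma support_add_eq' (htwo : (1 : K) + 1 = 1) (hcard : ∀ x : K, x = 0 ∨ x = 1)
    (hne : (0 : K) ≠ 1) {X : Type*} [DecidableEq X] (P Q : X →₀ K) :
    (P + Q).support = P.support ∪ Q.support := by
  ext b
  simp only [Finsupp.mem_support_iff, Finset.mem_union, Finsupp.add_apply]
  constructor
  · intro h
    by_contra hc
    push_neg at hc
    rw [hc.1, hc.2] at h
    simp at h
  · intro h hz
    obtain ⟨h1, h2⟩ := bool_add_zero htwo hcard hne hz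
    tauto

lemma support_mapDomain' (htwo : (1 : K) + 1 = 1) (hcard : ∀ x : K, x = 0 ∨ x = 1)
    (hne : (0 : K) ≠ 1) {X Y : Type*} [DecidableEq X] [DecidableEq Y] (f : X → Y) (P : X →₀ K) :
    (Finsupp.mapDomain f P).support = P.support.image f := by
  induction P using Finsupp.induction with
  | zero => simp
  | single_add a b g ha hb ih =>
    rw [Finsupp.mapDomain_add, Finsupp.mapDomain_single,
      support_add_eq' htwo hcard hne, support_add_eq' htwo hcard hne,
      Finsupp.support_single_ne_zero _ hb, Finsupp.support_single_ne_zero _ hb,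
      Finset.image_union, Finset.image_singleton, ih]

lemma single_one_mul_eq {X : Type*} [Monoid X] (x : X) (P : MonoidAlgebra K X) :
    (MonoidAlgebra.single x (1 : K) * P).coeff = Finsupp.mapDomain (fun y => x * y) P.coeff := by
  obtain ⟨P⟩ := P
  induction P using Finsupp.induction with
  | zero => simp
  | single_add a b g ha hb ih =>
    rw [MonoidAlgebra.ofCoeff_add, mul_add, MonoidAlgebra.coeff_add, ih, MonoidAlgebra.coeff_add, MonoidAlgebra.coeff_ofCoeff,
      MonoidAlgebra.coeff_ofCoeff, Finsupp.mapDomain_add, Finsupp.mapDomain_single,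
      MonoidAlgebra.ofCoeff_single, MonoidAlgebra.single_mul_single, one_mul, MonoidAlgebra.coeff_single]

open FreeMonoid in
lemma cSh_of (a : A) : cSh K (FreeMonoid.of a) =
    MonoidAlgebra.single (FreeMonoid.of a, 1) 1 + MonoidAlgebra.single (1, FreeMonoid.of a) 1 :=
  rfl

open FreeMonoid in
lemma supp_cSh (htwo : (1 : K) + 1 = 1) (hcard : ∀ x : K, x = 0 ∨ x = 1)
    (hne : (0 : K) ≠ 1) (l : List A) :
    ((cSh K (FreeMonoid.ofList l)).coeff.support : Set (FreeMonoid A × FreeMonoid A)) =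
      (fun pq : List A × List A => (FreeMonoid.ofList pq.1, FreeMonoid.ofList pq.2)) '' S l := by
  classical
  induction l with
  | nil =>
    rw [ofList_nil, map_one, MonoidAlgebra.one_def, MonoidAlgebra.coeff_single,
      Finsupp.support_single_ne_zero _ (fun h => hne h.symm)]
    simp only [S_nil, Set.image_singleton, Finset.coe_singleton]
    rfl
  | cons a l ih =>
    rw [ofList_cons, map_mul, cSh_of, add_mul, MonoidAlgebra.coeff_add, single_one_mul_eq, single_one_mul_eq,
      support_add_eq' htwo hcard hne, support_mapDomain' htwo hcard hne,
      support_mapDomain' htwo hcard hne]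
    rw [Finset.coe_union, Finset.coe_image, Finset.coe_image, ih, S_cons]
    rw [Set.image_union, Set.image_image, Set.image_image, Set.image_image, Set.image_image]
    first
      | rfl
      | congr 1

variable {A : Type*}

/-- `tens2 ∘ cSh` as a monoid homomorphism. -/
noncomputable def phi (K : Type*) [Semiring K] (r : Con (FreeMonoid A)) :
    FreeMonoid A →* MonoidAlgebra K (r.Quotient × r.Quotient) :=
  ((MonoidAlgebra.mapDomainRingHom K ((r.mk').prodMap (r.mk'))).toMonoidHom).comp (cSh K)

lemma phi_apply {K : Type*} [Semiring K] (r : Con (FreeMonoid A)) (u : FreeMonoid A) :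
    phi K r u = tens2 r (cSh K u) := by
  simp only [phi, MonoidHom.comp_apply, RingHom.toMonoidHom_eq_coe, MonoidHom.coe_coe,
    MonoidAlgebra.mapDomainRingHom_apply, tens2]
  try congr 1
  try rw [MonoidHom.coe_prodMap]
  try rfl

/-- The word-level function to the quotient. -/
def hL (r : Con (FreeMonoid A)) (l : List A) : r.Quotient := r.mk' (FreeMonoid.ofList l)

lemma hL_nil (r : Con (FreeMonoid A)) : hL r [] = 1 := by simp [hL]

lemma hL_cons (r : Con (FreeMonoid A)) (a : A) (l : List A) :
    hL r (a :: l) = r.mk' (FreeMonoid.of a) * hL r l := by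
  rw [hL, FreeMonoid.ofList_cons, map_mul]; rfl

lemma hL_append (r : Con (FreeMonoid A)) (l m : List A) :
    hL r (l ++ m) = hL r l * hL r m := by
  rw [hL, FreeMonoid.ofList_append, map_mul]; rfl

lemma hL_single (r : Con (FreeMonoid A)) (a : A) : hL r [a] = r.mk' (FreeMonoid.of a) := by
  rw [hL, FreeMonoid.ofList_singleton]

lemma hL_eq_iff (r : Con (FreeMonoid A)) {u v : FreeMonoid A} :
    r.mk' u = r.mk' v ↔ r u v := by
  rw [Con.coe_mk']
  exact Con.eq r

/-- The central consequence of compatibility: matching of splittings. -/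
lemma match_lemma {K : Type*} [Semiring K] (htwo : (1 : K) + 1 = 1)
    (hcard : ∀ x : K, x = 0 ∨ x = 1) (hne : (0 : K) ≠ 1)
    {r : Con (FreeMonoid A)} (hc : KShCompat K r) {x y : List A} (hxy : hL r x = hL r y) :
    ∀ p q : List A, (p, q) ∈ S x →
      ∃ p' q' : List A, (p', q') ∈ S y ∧ hL r p' = hL r p ∧ hL r q' = hL r q := by
  classical
  intro p q hpq
  have hr : r (FreeMonoid.ofList x) (FreeMonoid.ofList y) := (hL_eq_iff r).1 hxy
  have heq := hc _ _ hr
  have hsupp : ((tens2 (K := K) r (cSh K (FreeMonoid.ofList x))).coeff.support :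
        Set (r.Quotient × r.Quotient)) =
      ((tens2 (K := K) r (cSh K (FreeMonoid.ofList y))).coeff.support :
        Set (r.Quotient × r.Quotient)) := by rw [heq]
  rw [tens2, tens2, MonoidAlgebra.coeff_ofCoeff, MonoidAlgebra.coeff_ofCoeff, support_mapDomain' htwo hcard hne, support_mapDomain' htwo hcard hne,
    Finset.coe_image, Finset.coe_image, supp_cSh htwo hcard hne, supp_cSh htwo hcard hne,
    Set.image_image, Set.image_image] at hsupp
  have hmem : (r.mk' (FreeMonoid.ofList p), r.mk' (FreeMonoid.ofList q)) ∈
      (fun pq : List A × List A =>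
        (r.mk' (FreeMonoid.ofList pq.1), r.mk' (FreeMonoid.ofList pq.2))) '' S y := by
    rw [← hsupp]
    exact ⟨(p, q), hpq, rfl⟩
  obtain ⟨⟨p', q'⟩, hm, hval⟩ := hmem
  obtain ⟨h1, h2⟩ := Prod.mk.injEq .. ▸ hval
  exact ⟨p', q', hm, h1, h2⟩

lemma tens2_eq {K : Type*} [Semiring K] (r : Con (FreeMonoid A))
    (P : MonoidAlgebra K (FreeMonoid A × FreeMonoid A)) :
    tens2 r P = MonoidAlgebra.mapDomain (fun p => (r.mk' p.1, r.mk' p.2)) P := rfl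

/-- The backward direction: a congruence generated by relators of the three types
is compatible. -/
theorem backward_dir {K : Type*} [Semiring K] (htwo : (1 : K) + 1 = 1)
    {rel : FreeMonoid A → FreeMonoid A → Prop}
    (hshape : ∀ u v, rel u v → IsLE u v ∨ IsLI u v ∨ IsLC u v) :
    KShCompat K (conGen rel) := by
  intro u v huv
  rw [← phi_apply, ← phi_apply]
  have hker : conGen rel ≤ Con.ker (phi K (conGen rel)) := by
    apply Con.conGen_le.2
    intro x y hxy
    have hrxy : conGen rel x y := ConGen.Rel.of _ _ hxy
    rw [Con.ker_rel]
    rcases hshape x y hxy with ⟨a, rfl, rfl⟩ | ⟨a, b, rfl, rfl⟩ | ⟨a, b, rfl, rfl⟩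
    · -- LE : a ≡ 1
      have hval : (conGen rel).mk' (FreeMonoid.of a) = 1 := by
        rw [show (1 : (conGen rel).Quotient) = (conGen rel).mk' 1 from (map_one _).symm]
        exact (hL_eq_iff _).2 hrxy
      rw [phi_apply, phi_apply, map_one, cSh_of, tens2_eq, MonoidAlgebra.mapDomain_add,
        MonoidAlgebra.mapDomain_single, MonoidAlgebra.mapDomain_single]
      simp only [hval, map_one]
      rw [← MonoidAlgebra.single_add, htwo, MonoidAlgebra.one_def, tens2_eq, MonoidAlgebra.mapDomain_single]
      simp
    · -- LI : a ≡ b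
      have hval : (conGen rel).mk' (FreeMonoid.of a) = (conGen rel).mk' (FreeMonoid.of b) :=
        (hL_eq_iff _).2 hrxy
      rw [phi_apply, phi_apply, cSh_of, cSh_of, tens2_eq, tens2_eq, MonoidAlgebra.mapDomain_add,
        MonoidAlgebra.mapDomain_add, MonoidAlgebra.mapDomain_single, MonoidAlgebra.mapDomain_single,
        MonoidAlgebra.mapDomain_single, MonoidAlgebra.mapDomain_single]
      simp [hval]
    · -- LC : ab ≡ ba
      have hval : (conGen rel).mk' (FreeMonoid.of a) * (conGen rel).mk' (FreeMonoid.of b) =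
          (conGen rel).mk' (FreeMonoid.of b) * (conGen rel).mk' (FreeMonoid.of a) := by
        rw [← map_mul, ← map_mul]
        exact (hL_eq_iff _).2 hrxy
      rw [map_mul (phi K (conGen rel)), map_mul (phi K (conGen rel))]
      rw [phi_apply, phi_apply, cSh_of, cSh_of, tens2_eq, tens2_eq, MonoidAlgebra.mapDomain_add,
        MonoidAlgebra.mapDomain_add, MonoidAlgebra.mapDomain_single, MonoidAlgebra.mapDomain_single,
        MonoidAlgebra.mapDomain_single, MonoidAlgebra.mapDomain_single]
      rw [add_mul, add_mul, mul_add, mul_add, mul_add, mul_add]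
      simp only [MonoidAlgebra.single_mul_single, one_mul, Prod.mk_mul_mk, mul_one]
      simp only [map_one, one_mul, mul_one]
      rw [hval]
      abel
  exact (Con.ker_rel _).1 (hker huv)

end Algebra

section Quotient
open scoped Classical

variable {A : Type*} {r : Con (FreeMonoid A)}

/-- The class of a letter. -/
def cls (r : Con (FreeMonoid A)) (a : A) : r.Quotient := hL r [a]

/-- The matching property extracted from compatibility. -/
def Match (r : Con (FreeMonoid A)) : Prop :=
  ∀ x y : List A, hL r x = hL r y → ∀ p q : List A, (p, q) ∈ S x →
    ∃ p' q' : List A, (p', q') ∈ S y ∧ hL r p' = hL r p ∧ hL r q' = hL r q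

/-- Erasure-free words. -/
def EF (r : Con (FreeMonoid A)) (l : List A) : Prop := ∀ a ∈ l, cls r a ≠ 1

lemma EF_sublist {l p q : List A} (h : (p, q) ∈ S l) (hl : EF r l) : EF r p ∧ EF r q :=
  ⟨fun a ha => hl a (mem_of_mem_left h ha), fun a ha => hl a (mem_of_mem_right h ha)⟩

lemma isolate_letter {l : List A} {b : A} (hb : b ∈ l) :
    ∃ t : List A, ([b], t) ∈ S l := by
  obtain ⟨s, t, rfl⟩ := append_of_mem hb
  refine ⟨s ++ t, ?_⟩
  have h1 : (([b] : List A), t) ∈ S (b :: t) :=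
    mem_S_cons.2 (Or.inl ⟨[], rfl, right_full_mem t⟩)
  have := S_append (right_full_mem s) h1
  simpa using this

lemma L0 (HM : Match r) : ∀ {u : List A}, hL r u = 1 → ∀ a ∈ u, cls r a = 1 := by
  intro u
  induction u with
  | nil => intro _ a ha; simp at ha
  | cons a t ih =>
    intro hu b hb
    have hmem : (([a] : List A), t) ∈ S (a :: t) :=
      mem_S_cons.2 (Or.inl ⟨[], rfl, right_full_mem t⟩)
    obtain ⟨p', q', hs, h1, h2⟩ := HM (a :: t) [] (by rw [hu, hL_nil]) _ _ hmem
    obtain ⟨rfl, rfl⟩ : p' = [] ∧ q' = [] := by simpa [S_nil, Prod.ext_iff] using hs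
    rcases mem_cons.1 hb with rfl | hb'
    · exact (h1.symm.trans (hL_nil r))
    · exact ih (h2.symm.trans (hL_nil r)) b hb'

lemma EF_nil_of_one (hu : EF r u) (h : hL r u = 1) (HM : Match r) : u = [] := by
  cases u with
  | nil => rfl
  | cons a t => exact absurd (L0 HM h a (mem_cons_self)) (hu a (mem_cons_self))

lemma L1 (HM : Match r) {w : List A} (c : A) (hw : EF r w) (hc : cls r c ≠ 1)
    (h : hL r w = hL r [c]) : ∃ d, w = [d] ∧ cls r d = cls r c := by
  cases w with
  | nil => exact absurd (h.symm.trans (hL_nil r)) hc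
  | cons a t =>
    have hmem : (([a] : List A), t) ∈ S (a :: t) :=
      mem_S_cons.2 (Or.inl ⟨[], rfl, right_full_mem t⟩)
    obtain ⟨p', q', hs, h1, h2⟩ := HM (a :: t) [c] h _ _ hmem
    rcases mem_S_cons.1 hs with ⟨p₂, rfl, hm2⟩ | ⟨q₂, rfl, hm2⟩
    · obtain ⟨rfl, rfl⟩ : p₂ = [] ∧ q' = [] := by simpa [S_nil, Prod.ext_iff] using hm2
      have ht : t = [] := EF_nil_of_one (fun x hx => hw x (mem_cons_of_mem _ hx))
        (h2.symm.trans (hL_nil r)) HM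
      subst ht
      exact ⟨a, rfl, h1.symm⟩
    · obtain ⟨rfl, rfl⟩ : p' = [] ∧ q₂ = [] := by simpa [S_nil, Prod.ext_iff] using hm2
      exact absurd (h1.symm.trans (hL_nil r)) (hw a (mem_cons_self))

lemma letter_class_mem (HM : Match r) {x' z : List A} (h : hL r x' = hL r z)
    (hx' : EF r x') (hz : EF r z) : ∀ b ∈ x', ∃ d ∈ z, cls r d = cls r b := by
  intro b hb
  obtain ⟨t, ht⟩ := isolate_letter hb
  obtain ⟨w, w', hs, h1, h2⟩ := HM x' z h _ _ ht
  have hwEF : EF r w := (EF_sublist hs hz).1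
  obtain ⟨d, rfl, hd⟩ := L1 HM b hwEF (hx' b hb) h1
  exact ⟨d, mem_of_mem_left hs (mem_cons_self), hd⟩

/-- All-one-class words of equal class have equal length. -/
lemma P1 (HM : Match r) {θ : r.Quotient} (hθ : θ ≠ 1) :
    ∀ {x : List A} {y : List A}, (∀ a ∈ x, cls r a = θ) → (∀ a ∈ y, cls r a = θ) →
      hL r x = hL r y → x.length = y.length := by
  intro x
  induction x with
  | nil =>
    intro y _ hy h
    cases y with
    | nil => rfl
    | cons b t =>
      exfalso
      have hb1 : cls r b = 1 := L0 HM (h.symm.trans (hL_nil r)) b (mem_cons_self)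
      rw [hy b (mem_cons_self)] at hb1
      exact hθ hb1
  | cons a t ih =>
    intro y hx hy h
    have hmem : (([a] : List A), t) ∈ S (a :: t) :=
      mem_S_cons.2 (Or.inl ⟨[], rfl, right_full_mem t⟩)
    obtain ⟨p', q', hs, h1, h2⟩ := HM (a :: t) y h _ _ hmem
    have hp'θ : ∀ b ∈ p', cls r b = θ := fun b hb => hy b (mem_of_mem_left hs hb)
    have hq'θ : ∀ b ∈ q', cls r b = θ := fun b hb => hy b (mem_of_mem_right hs hb)
    have haθ : cls r a = θ := hx a (mem_cons_self)
    obtain ⟨d, rfl, _⟩ := L1 HM a (fun b hb => by rw [hp'θ b hb]; exact hθ)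
      (by rw [cls, haθ] at *; exact hθ) h1
    have hlen := length_S hs
    simp only [length_singleton] at hlen
    have ht := ih (fun b hb => hx b (mem_cons_of_mem _ hb)) hq'θ h2.symm
    simp only [length_cons]
    omega

/-- Counts of non-trivial classes are invariant. -/
lemma COUNT (HM : Match r) {x y : List A} (hx : EF r x) (hy : EF r y)
    (h : hL r x = hL r y) {θ : r.Quotient} (hθ : θ ≠ 1) :
    x.countP (fun a => decide (cls r a = θ)) = y.countP (fun a => decide (cls r a = θ)) := by
  -- it suffices to prove one inequality, by symmetry
  suffices hle : ∀ x y : List A, EF r x → EF r y → hL r x = hL r y →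
      x.countP (fun a => decide (cls r a = θ)) ≤ y.countP (fun a => decide (cls r a = θ)) by
    exact le_antisymm (hle x y hx hy h) (hle y x hy hx h.symm)
  clear hx hy h x y
  intro x y hx hy h
  set P : A → Bool := fun a => decide (cls r a = θ) with hP
  have hfx : (x.filter P, x.filter fun a => ¬ P a) ∈ S x := filter_mem_S P x
  obtain ⟨x', y', hs, h1, h2⟩ := HM x y h _ _ hfx
  have hfθ : ∀ b ∈ x.filter P, cls r b = θ := by
    intro b hb
    have := of_mem_filter hb
    simpa [hP] using this
  have hx'θ : ∀ b ∈ x', cls r b = θ := by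
    intro b hb
    obtain ⟨d, hd, hdb⟩ := letter_class_mem HM h1 (EF_sublist hs hy).1
      (fun e he => by rw [hfθ e he]; exact hθ) b hb
    rw [← hdb, hfθ d hd]
  have hlen : x'.length = (x.filter P).length := P1 HM hθ hx'θ hfθ h1
  have hcount := countP_S P hs
  have hx'P : x'.countP P = x'.length := countP_eq_length.2 (fun b hb => by
    simp [hP, hx'θ b hb])
  rw [countP_eq_length_filter, ← hlen, ← hx'P]
  omega

/-- Two-class words: length is the sum of the two counts. -/
lemma len2 {α β : r.Quotient} (hαβ : α ≠ β) {l : List A}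
    (h2 : ∀ a ∈ l, cls r a = α ∨ cls r a = β) :
    l.length = l.countP (fun a => decide (cls r a = α)) +
      l.countP (fun a => decide (cls r a = β)) := by
  induction l with
  | nil => simp
  | cons a t ih =>
    have ht := ih (fun b hb => h2 b (mem_cons_of_mem _ hb))
    rw [length_cons, countP_cons, countP_cons, ht]
    rcases h2 a (mem_cons_self) with h | h <;> simp [h, hαβ, Ne.symm hαβ] <;> omega

lemma hL_eq_prod_map (l : List A) : hL r l = (l.map (cls r)).prod := by
  induction l with
  | nil => simp [hL_nil]
  | cons a t ih => rw [hL_cons, map_cons, prod_cons, ih]; rfl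

/-- The core rigidity lemma: words over two non-commuting classes have equal class words. -/
lemma core (HM : Match r) {α β : r.Quotient} (hα : α ≠ 1) (hβ : β ≠ 1)
    (hnc : α * β ≠ β * α) :
    ∀ n : ℕ, ∀ {x y : List A}, x.length + y.length ≤ n →
      (∀ a ∈ x, cls r a = α ∨ cls r a = β) → (∀ a ∈ y, cls r a = α ∨ cls r a = β) →
      hL r x = hL r y → x.map (cls r) = y.map (cls r) := by
  have hαβ : α ≠ β := fun h => hnc (by rw [h])
  intro n
  induction n with
  | zero =>
    intro x y hlen hx hy h
    obtain ⟨rfl, rfl⟩ : x = [] ∧ y = [] := by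
      constructor <;> [skip; skip] <;> rw [← length_eq_zero_iff] <;> omega
    rfl
  | succ n ih =>
    intro x y hlen h2x h2y h
    have hEFx : EF r x := fun a ha => by rcases h2x a ha with he | he <;> rw [he] <;> assumption
    have hEFy : EF r y := fun a ha => by rcases h2y a ha with he | he <;> rw [he] <;> assumption
    -- counts
    have hcα := COUNT HM hEFx hEFy h hα
    have hcβ := COUNT HM hEFx hEFy h hβ
    have hlxy : x.length = y.length := by rw [len2 hαβ h2x, len2 hαβ h2y, hcα, hcβ]
    -- the matching at the level of class words
    have key : ∀ {x y : List A}, x.length + y.length ≤ n + 1 →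
        (∀ a ∈ x, cls r a = α ∨ cls r a = β) → (∀ a ∈ y, cls r a = α ∨ cls r a = β) →
        hL r x = hL r y → x.length = y.length →
        ∀ P Q : List r.Quotient, (P, Q) ∈ S (x.map (cls r)) → P ≠ [] → Q ≠ [] →
          (P, Q) ∈ S (y.map (cls r)) := by
      intro x y hlen h2x h2y h hlxy P Q hPQ hPne hQne
      have hEFx : EF r x := fun a ha => by rcases h2x a ha with he | he <;> rw [he] <;> assumption
      have hEFy : EF r y := fun a ha => by rcases h2y a ha with he | he <;> rw [he] <;> assumption
      obtain ⟨p, q, hpq, rfl, rfl⟩ := S_map_surj hPQ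
      obtain ⟨p', q', hs, h1, h2⟩ := HM x y h _ _ hpq
      have hpne : p ≠ [] := fun hh => hPne (by rw [hh]; rfl)
      have hqne : q ≠ [] := fun hh => hQne (by rw [hh]; rfl)
      have h2p : ∀ a ∈ p, cls r a = α ∨ cls r a = β :=
        fun a ha => h2x a (mem_of_mem_left hpq ha)
      have h2q : ∀ a ∈ q, cls r a = α ∨ cls r a = β :=
        fun a ha => h2x a (mem_of_mem_right hpq ha)
      have h2p' : ∀ a ∈ p', cls r a = α ∨ cls r a = β := by
        intro b hb
        obtain ⟨d, hd, hdb⟩ := letter_class_mem HM h1 (EF_sublist hs hEFy).1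
          (EF_sublist hpq hEFx).1 b hb
        rw [← hdb]; exact h2p d hd
      have h2q' : ∀ a ∈ q', cls r a = α ∨ cls r a = β := by
        intro b hb
        obtain ⟨d, hd, hdb⟩ := letter_class_mem HM h2 (EF_sublist hs hEFy).2
          (EF_sublist hpq hEFx).2 b hb
        rw [← hdb]; exact h2q d hd
      have hEFp := (EF_sublist hpq hEFx).1
      have hEFq := (EF_sublist hpq hEFx).2
      have hEFp' := (EF_sublist hs hEFy).1
      have hEFq' := (EF_sublist hs hEFy).2
      -- lengths
      have hlp : p'.length = p.length := by
        rw [len2 hαβ h2p, len2 hαβ h2p', COUNT HM hEFp' hEFp h1 hα, COUNT HM hEFp' hEFp h1 hβ]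
      have hlq : q'.length = q.length := by
        rw [len2 hαβ h2q, len2 hαβ h2q', COUNT HM hEFq' hEFq h2 hα, COUNT HM hEFq' hEFq h2 hβ]
      have hlS := length_S hpq
      have hplt : p.length < x.length := by
        have := length_S hpq
        have : q.length ≠ 0 := fun hh => hqne (length_eq_zero_iff.1 hh)
        omega
      have hqlt : q.length < x.length := by
        have := length_S hpq
        have : p.length ≠ 0 := fun hh => hpne (length_eq_zero_iff.1 hh)
        omega
      have hmp : p'.map (cls r) = p.map (cls r) := by
        apply ih (x := p') (y := p) (by omega) h2p' h2p h1
      have hmq : q'.map (cls r) = q.map (cls r) := by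
        apply ih (x := q') (y := q) (by omega) h2q' h2q h2
      have := S_map (cls r) hs
      rw [hmp, hmq] at this
      exact this
    -- now apply the combinatorial lemma
    have hm := key hlen h2x h2y h hlxy
    have hm' := key (by omega) h2y h2x h.symm hlxy.symm
    have hUcls : ∀ c ∈ x.map (cls r), c = α ∨ c = β := by
      intro c hc; obtain ⟨a, ha, rfl⟩ := mem_map.1 hc; exact h2x a ha
    have hVcls : ∀ c ∈ y.map (cls r), c = α ∨ c = β := by
      intro c hc; obtain ⟨a, ha, rfl⟩ := mem_map.1 hc; exact h2y a ha
    have hcount : ∀ θ : r.Quotient, (x.map (cls r)).count θ = x.countP (fun a => decide (cls r a = θ)) := by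
      intro θ
      rw [count, countP_map]
      apply countP_congr
      intro a _
      simp [Function.comp]
    have hcounty : ∀ θ : r.Quotient, (y.map (cls r)).count θ = y.countP (fun a => decide (cls r a = θ)) := by
      intro θ
      rw [count, countP_map]
      apply countP_congr
      intro a _
      simp [Function.comp]
    rcases comb hαβ hUcls hVcls (by rw [hcount, hcounty, hcα]) (by rw [hcount, hcounty, hcβ])
      hm hm' with heq | ⟨hU, hV⟩ | ⟨hU, hV⟩
    · exact heq
    · exfalso
      apply hnc
      have h1 : hL r x = α * β := by rw [hL_eq_prod_map, hU]; simp
      have h2 : hL r y = β * α := by rw [hL_eq_prod_map, hV]; simp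
      rw [← h1, ← h2, h]
    · exfalso
      apply hnc
      have h1 : hL r x = β * α := by rw [hL_eq_prod_map, hU]; simp
      have h2 : hL r y = α * β := by rw [hL_eq_prod_map, hV]; simp
      rw [← h1, ← h2, ← h]

end Quotient

section Trace
open scoped Classical

variable {A : Type*} {r : Con (FreeMonoid A)}

lemma cnt_or {α β : r.Quotient} (hαβ : α ≠ β) (l : List A) :
    l.countP (fun a => decide (cls r a = α ∨ cls r a = β)) =
      l.countP (fun a => decide (cls r a = α)) + l.countP (fun a => decide (cls r a = β)) := by
  induction l with
  | nil => simp
  | cons a t ih =>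
    rw [countP_cons, countP_cons, countP_cons, ih]
    by_cases h1 : cls r a = α
    · have h2 : ¬ cls r a = β := fun hh => hαβ (h1.symm.trans hh)
      simp [h1, h2, hαβ, Ne.symm hαβ] <;> omega
    · by_cases h2 : cls r a = β <;> simp [h1, h2, hαβ, Ne.symm hαβ] <;> omega

/-- Projection to a dependent pair of classes is invariant. -/
lemma PROJ (HM : Match r) {x y : List A} (hx : EF r x) (hy : EF r y) (h : hL r x = hL r y)
    {α β : r.Quotient} (hα : α ≠ 1) (hβ : β ≠ 1) (hnc : α * β ≠ β * α) :
    (x.filter (fun a => decide (cls r a = α ∨ cls r a = β))).map (cls r) =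
      (y.filter (fun a => decide (cls r a = α ∨ cls r a = β))).map (cls r) := by
  have hαβ : α ≠ β := fun hh => hnc (by rw [hh])
  set P : A → Bool := fun a => decide (cls r a = α ∨ cls r a = β) with hPdef
  have hfil : (x.filter P, x.filter fun a => ¬ P a) ∈ S x := filter_mem_S P x
  obtain ⟨x', y', hs, h1, h2⟩ := HM x y h _ _ hfil
  have h2px : ∀ a ∈ x.filter P, cls r a = α ∨ cls r a = β := by
    intro a ha
    have := of_mem_filter ha
    simpa [hPdef] using this
  have hEFpx : EF r (x.filter P) := by
    intro a ha
    rcases h2px a ha with he | he <;> rw [he] <;> assumption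
  have h2x' : ∀ a ∈ x', cls r a = α ∨ cls r a = β := by
    intro b hb
    obtain ⟨d, hd, hdb⟩ := letter_class_mem HM h1 (EF_sublist hs hy).1 hEFpx b hb
    rw [← hdb]; exact h2px d hd
  have hcw : x'.map (cls r) = (x.filter P).map (cls r) :=
    core HM hα hβ hnc (x'.length + (x.filter P).length) le_rfl h2x' h2px h1
  have hallP : ∀ a ∈ x', P a := by
    intro a ha
    simp only [hPdef]
    exact decide_eq_true (h2x' a ha)
  -- length of x' equals the number of α,β letters of y
  have hlen1 : x'.length = (x.filter P).length := by
    have := congrArg List.length hcw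
    simpa using this
  have hlen2 : (x.filter P).length = (y.filter P).length := by
    rw [← countP_eq_length_filter, ← countP_eq_length_filter, hPdef]
    rw [cnt_or hαβ, cnt_or hαβ, COUNT HM hx hy h hα, COUNT HM hx hy h hβ]
  have hx'full : x' = y.filter P :=
    all_full_eq_filter P hs hallP (hlen1.trans hlen2)
  rw [← hx'full, hcw]

/-- Relators extracted from `r`. -/
def relOf (r : Con (FreeMonoid A)) : FreeMonoid A → FreeMonoid A → Prop :=
  fun u v => r u v ∧ (IsLE u v ∨ IsLI u v ∨ IsLC u v)

lemma s_le_r : conGen (relOf r) ≤ r := Con.conGen_le.2 fun _ _ h => h.1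

lemma cls_eq_mk (a : A) : cls r a = r.mk' (FreeMonoid.of a) := hL_single r a

lemma sLE {a : A} (h : cls r a = 1) : conGen (relOf r) (FreeMonoid.of a) 1 := by
  refine ConGen.Rel.of _ _ ⟨(hL_eq_iff r).1 ?_, Or.inl ⟨a, rfl, rfl⟩⟩
  rw [map_one, ← cls_eq_mk, h]

lemma sLI {a b : A} (h : cls r a = cls r b) :
    conGen (relOf r) (FreeMonoid.of a) (FreeMonoid.of b) := by
  refine ConGen.Rel.of _ _ ⟨(hL_eq_iff r).1 ?_, Or.inr (Or.inl ⟨a, b, rfl, rfl⟩)⟩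
  rw [← cls_eq_mk, ← cls_eq_mk, h]

lemma sLC {a b : A} (h : cls r a * cls r b = cls r b * cls r a) :
    conGen (relOf r) (FreeMonoid.of a * FreeMonoid.of b) (FreeMonoid.of b * FreeMonoid.of a) := by
  refine ConGen.Rel.of _ _ ⟨(hL_eq_iff r).1 ?_, Or.inr (Or.inr ⟨a, b, rfl, rfl⟩)⟩
  rw [map_mul, map_mul, ← cls_eq_mk, ← cls_eq_mk, h]

lemma move (b : A) : ∀ (Pf Sf : List A), (∀ c ∈ Pf, cls r c * cls r b = cls r b * cls r c) →
    conGen (relOf r) (FreeMonoid.ofList (Pf ++ b :: Sf))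
      (FreeMonoid.of b * FreeMonoid.ofList (Pf ++ Sf)) := by
  intro Pf
  induction Pf with
  | nil =>
    intro Sf _
    rw [nil_append, nil_append, FreeMonoid.ofList_cons]
    exact (conGen (relOf r)).refl _
  | cons c Pf' ih =>
    intro Sf hcomm
    have h1 := ih Sf (fun d hd => hcomm d (mem_cons_of_mem _ hd))
    have h2 : conGen (relOf r) (FreeMonoid.ofList ((c :: Pf') ++ b :: Sf))
        (FreeMonoid.of c * (FreeMonoid.of b * FreeMonoid.ofList (Pf' ++ Sf))) := by
      rw [cons_append, FreeMonoid.ofList_cons]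
      exact (conGen (relOf r)).mul ((conGen (relOf r)).refl _) h1
    have h3 : conGen (relOf r)
        (FreeMonoid.of c * (FreeMonoid.of b * FreeMonoid.ofList (Pf' ++ Sf)))
        (FreeMonoid.of b * FreeMonoid.ofList ((c :: Pf') ++ Sf)) := by
      rw [cons_append, FreeMonoid.ofList_cons, ← mul_assoc, ← mul_assoc]
      exact (conGen (relOf r)).mul (sLC (hcomm c (mem_cons_self)))
        ((conGen (relOf r)).refl _)
    exact (conGen (relOf r)).trans h2 h3

lemma erase_to_EF : ∀ l : List A,
    conGen (relOf r) (FreeMonoid.ofList l)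
      (FreeMonoid.ofList (l.filter (fun a => decide (¬ cls r a = 1)))) := by
  intro l
  induction l with
  | nil => exact (conGen (relOf r)).refl _
  | cons a t ih =>
    by_cases h : cls r a = 1
    · rw [filter_cons_of_neg (by simp [h]), FreeMonoid.ofList_cons]
      have h1 : conGen (relOf r) (FreeMonoid.of a * FreeMonoid.ofList t)
          (1 * FreeMonoid.ofList t) :=
        (conGen (relOf r)).mul (sLE h) ((conGen (relOf r)).refl _)
      rw [one_mul] at h1
      exact (conGen (relOf r)).trans h1 ih
    · rw [filter_cons_of_pos (by simp [h]), FreeMonoid.ofList_cons, FreeMonoid.ofList_cons]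
      exact (conGen (relOf r)).mul ((conGen (relOf r)).refl _) ih

lemma first_occ {P : A → Bool} : ∀ {l : List A}, (∃ a ∈ l, P a) →
    ∃ l₁ b l₂, l = l₁ ++ b :: l₂ ∧ P b ∧ ∀ c ∈ l₁, ¬ P c := by
  intro l
  induction l with
  | nil => rintro ⟨a, ha, _⟩; simp at ha
  | cons a t ih =>
    intro hex
    by_cases hPa : P a
    · exact ⟨[], a, t, rfl, hPa, by simp⟩
    · obtain ⟨b, hb, hPb⟩ := hex
      rcases mem_cons.1 hb with rfl | hb'
      · exact absurd hPb hPa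
      · obtain ⟨l₁, c, l₂, rfl, h1, h2⟩ := ih ⟨b, hb', hPb⟩
        refine ⟨a :: l₁, c, l₂, rfl, h1, ?_⟩
        intro d hd
        rcases mem_cons.1 hd with rfl | hd'
        · exact hPa
        · exact h2 d hd'

/-- The main trace lemma: invariants imply `s`-equivalence for erasure-free words. -/
lemma trace (HM : Match r) : ∀ x y : List A, EF r x → EF r y →
    (∀ θ : r.Quotient, θ ≠ 1 →
      x.countP (fun a => decide (cls r a = θ)) = y.countP (fun a => decide (cls r a = θ))) →
    (∀ α β : r.Quotient, α ≠ 1 → β ≠ 1 → α * β ≠ β * α →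
      (x.filter (fun a => decide (cls r a = α ∨ cls r a = β))).map (cls r) =
        (y.filter (fun a => decide (cls r a = α ∨ cls r a = β))).map (cls r)) →
    conGen (relOf r) (FreeMonoid.ofList x) (FreeMonoid.ofList y) := by
  intro x
  induction x with
  | nil =>
    intro y hx hy hcnt hproj
    cases y with
    | nil => exact (conGen _).refl _
    | cons b t =>
      exfalso
      have hθ := hy b (mem_cons_self)
      have h0 := hcnt (cls r b) hθ
      rw [countP_nil, countP_cons] at h0
      simp at h0 <;> omega
  | cons a x₁ ih =>
    intro y hx hy hcnt hproj
    have hα1 : cls r a ≠ 1 := hx a (mem_cons_self)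
    -- find the first occurrence of the class of a in y
    have hex : ∃ c ∈ y, (fun c => decide (cls r c = cls r a)) c = true := by
      rw [← countP_pos_iff]
      have h1 := hcnt (cls r a) hα1
      rw [countP_cons] at h1
      simp at h1
      omega
    obtain ⟨Pf, b, Sf, rfl, hbα, hPf⟩ := first_occ hex
    have hbα' : cls r b = cls r a := of_decide_eq_true hbα
    -- every letter of the prefix commutes with the class of a
    have hcomm : ∀ c ∈ Pf, cls r c * cls r a = cls r a * cls r c := by
      intro c hc
      by_contra hnc
      have hγ1 : cls r c ≠ 1 := hy c (by simp [hc])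
      have hγα : ¬ cls r c = cls r a := by
        have := hPf c hc
        simpa using this
      have hp := hproj (cls r c) (cls r a) hγ1 hα1 hnc
      -- compare heads
      have hxhead : ((a :: x₁).filter
          (fun e => decide (cls r e = cls r c ∨ cls r e = cls r a))).map (cls r) =
          cls r a :: (x₁.filter
            (fun e => decide (cls r e = cls r c ∨ cls r e = cls r a))).map (cls r) := by
        rw [filter_cons_of_pos (by simp), map_cons]
      have hcfil : c ∈ Pf.filter (fun e => decide (cls r e = cls r c ∨ cls r e = cls r a)) :=
        mem_filter.2 ⟨hc, by simp⟩
      obtain ⟨e, t', he⟩ := exists_cons_of_ne_nil (ne_nil_of_mem hcfil)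
      have hyhead : ((Pf ++ b :: Sf).filter
          (fun e => decide (cls r e = cls r c ∨ cls r e = cls r a))).map (cls r) =
          cls r e :: (t' ++ (b :: Sf).filter
            (fun e => decide (cls r e = cls r c ∨ cls r e = cls r a))).map (cls r) := by
        rw [filter_append, he, cons_append, map_cons]
      rw [hxhead, hyhead] at hp
      have hheads : cls r a = cls r e := by
        have := congrArg List.head? hp
        simpa using this
      have heP : e ∈ Pf := mem_of_mem_filter (he ▸ (mem_cons_self (a := e) (l := t')))
      have hePf : ¬ cls r e = cls r a := by simpa using hPf e heP
      exact hePf hheads.symm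
    -- move b to the front of y
    have hmv := move b Pf Sf (fun c hc => by rw [hbα']; exact hcomm c hc)
    -- the recursion hypotheses
    have hEFx₁ : EF r x₁ := fun e he => hx e (mem_cons_of_mem _ he)
    have hEFPS : EF r (Pf ++ Sf) := by
      intro e he
      rcases mem_append.1 he with h' | h'
      · exact hy e (mem_append.2 (Or.inl h'))
      · exact hy e (by simp [h'])
    have hcnt' : ∀ θ : r.Quotient, θ ≠ 1 →
        x₁.countP (fun e => decide (cls r e = θ)) =
          (Pf ++ Sf).countP (fun e => decide (cls r e = θ)) := by
      intro θ hθ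
      have h0 := hcnt θ hθ
      rw [countP_cons, countP_append, countP_cons] at h0
      rw [countP_append]
      have e1 : (decide (cls r b = θ)) = (decide (cls r a = θ)) := by rw [hbα']
      rw [e1] at h0
      cases hd : decide (cls r a = θ) <;> rw [hd] at h0 <;> simp at h0 <;> omega
    have hproj' : ∀ γ δ : r.Quotient, γ ≠ 1 → δ ≠ 1 → γ * δ ≠ δ * γ →
        (x₁.filter (fun e => decide (cls r e = γ ∨ cls r e = δ))).map (cls r) =
          ((Pf ++ Sf).filter (fun e => decide (cls r e = γ ∨ cls r e = δ))).map (cls r) := by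
      intro γ δ hγ hδ hncgd
      have hp0 := hproj γ δ hγ hδ hncgd
      by_cases hmem : cls r a = γ ∨ cls r a = δ
      · have hPfnone : ∀ c ∈ Pf, ¬ (cls r c = γ ∨ cls r c = δ) := by
          intro c hc hcd
          have hcα : ¬ cls r c = cls r a := by simpa using hPf c hc
          have hcm := hcomm c hc
          rcases hmem with hm | hm <;> rcases hcd with hc' | hc'
          · exact hcα (hc'.trans hm.symm)
          · apply hncgd
            rw [← hm, ← hc']
            exact hcm.symm
          · apply hncgd
            rw [← hc', ← hm]
            exact hcm
          · exact hcα (hc'.trans hm.symm)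
        have hfPf : Pf.filter (fun e => decide (cls r e = γ ∨ cls r e = δ)) = [] := by
          rw [filter_eq_nil_iff]
          intro c hc
          simpa using hPfnone c hc
        rw [filter_cons_of_pos (by simpa using hmem), map_cons] at hp0
        have hbP : (fun e => decide (cls r e = γ ∨ cls r e = δ)) b = true := by
          simp only [hbα', decide_eq_true_eq]
          exact hmem
        rw [filter_append, hfPf, nil_append,
          filter_cons_of_pos (p := fun e => decide (cls r e = γ ∨ cls r e = δ)) (l := Sf) (a := b) hbP,
          map_cons] at hp0
        rw [filter_append, hfPf, nil_append]
        have := congrArg List.tail hp0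
        simpa using this
      · rw [filter_cons_of_neg (by simpa using hmem)] at hp0
        have hbnot : ¬ (cls r b = γ ∨ cls r b = δ) := by rw [hbα']; exact hmem
        rw [filter_append, filter_cons_of_neg (by simpa using hbnot), ← filter_append] at hp0
        exact hp0
    have hrec := ih (Pf ++ Sf) hEFx₁ hEFPS hcnt' hproj'
    have hstep1 : conGen (relOf r) (FreeMonoid.ofList (a :: x₁))
        (FreeMonoid.of a * FreeMonoid.ofList (Pf ++ Sf)) := by
      rw [FreeMonoid.ofList_cons]
      exact (conGen (relOf r)).mul ((conGen (relOf r)).refl _) hrec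
    have hstep2 : conGen (relOf r) (FreeMonoid.of a * FreeMonoid.ofList (Pf ++ Sf))
        (FreeMonoid.of b * FreeMonoid.ofList (Pf ++ Sf)) :=
      (conGen (relOf r)).mul (sLI hbα'.symm) ((conGen (relOf r)).refl _)
    exact (conGen (relOf r)).trans hstep1 ((conGen (relOf r)).trans hstep2
      ((conGen (relOf r)).symm hmv))

/-- The forward direction: a compatible congruence is contained in the congruence
generated by its letter-type relators. -/
lemma main_forward {K : Type*} [Semiring K] (htwo : (1 : K) + 1 = 1)
    (hcard : ∀ x : K, x = 0 ∨ x = 1) (hne : (0 : K) ≠ 1) (hc : KShCompat K r) :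
    ∀ u v : FreeMonoid A, r u v → conGen (relOf r) u v := by
  have HM : Match r := fun x y hxy => match_lemma htwo hcard hne hc hxy
  intro u v huv
  have hu : FreeMonoid.ofList (FreeMonoid.toList u) = u := FreeMonoid.ofList_toList u
  have hv : FreeMonoid.ofList (FreeMonoid.toList v) = v := FreeMonoid.ofList_toList v
  set fu := (FreeMonoid.toList u).filter (fun a => decide (¬ cls r a = 1)) with hfu
  set fv := (FreeMonoid.toList v).filter (fun a => decide (¬ cls r a = 1)) with hfv
  have e1 : conGen (relOf r) u (FreeMonoid.ofList fu) := by
    rw [← hu]; exact erase_to_EF (FreeMonoid.toList u)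
  have e2 : conGen (relOf r) v (FreeMonoid.ofList fv) := by
    rw [← hv]; exact erase_to_EF (FreeMonoid.toList v)
  have hr1 : r u (FreeMonoid.ofList fu) := s_le_r e1
  have hr2 : r v (FreeMonoid.ofList fv) := s_le_r e2
  have q1 : r.mk' u = r.mk' (FreeMonoid.ofList fu) := (hL_eq_iff r).2 hr1
  have q2 : r.mk' v = r.mk' (FreeMonoid.ofList fv) := (hL_eq_iff r).2 hr2
  have q3 : r.mk' u = r.mk' v := (hL_eq_iff r).2 huv
  have hL12 : hL r fu = hL r fv := by
    show r.mk' (FreeMonoid.ofList fu) = r.mk' (FreeMonoid.ofList fv)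
    rw [← q1, ← q2, q3]
  have hEFu : EF r fu := fun a ha => by simpa using (of_mem_filter ha)
  have hEFv : EF r fv := fun a ha => by simpa using (of_mem_filter ha)
  have htr := trace HM fu fv hEFu hEFv
    (fun θ hθ => COUNT HM hEFu hEFv hL12 hθ)
    (fun α β hα hβ hnc2 => PROJ HM hEFu hEFv hL12 hα hβ hnc2)
  exact (conGen (relOf r)).trans e1 ((conGen (relOf r)).trans htr
    ((conGen (relOf r)).symm e2))

end Trace
end Stmt17

/-- Let `K` be the Boolean semiring (exactly two elements `0 ≠ 1`,
with `1 + 1 = 1`). A congruence on `A*` is `K`-⧢ compatible iff it is generated by a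
set of relators each of type (LE) `a ≡ 1`, (LI) `a ≡ b`, or (LC) `ab ≡ ba`. -/
theorem stmt_17 {K A : Type*} [Semiring K] [Fintype A]
    (htwo : (1 : K) + 1 = 1) (hcard : ∀ x : K, x = 0 ∨ x = 1) (hne : (0 : K) ≠ 1)
    (r : Con (FreeMonoid A)) :
    KShCompat K r ↔
      ∃ rel : FreeMonoid A → FreeMonoid A → Prop,
        (∀ u v, rel u v → IsLE u v ∨ IsLI u v ∨ IsLC u v) ∧ r = conGen rel := by
  constructor
  · intro hc
    refine ⟨Stmt17.relOf r, fun u v h => h.2, ?_⟩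
    apply _root_.le_antisymm
    · exact fun u v huv => Stmt17.main_forward htwo hcard hne hc u v huv
    · exact Con.conGen_le.2 fun u v h => h.1
  · rintro ⟨rel, hshape, rfl⟩
    exact Stmt17.backward_dir htwo hshape
end
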